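/- arXiv:2501.03806 — 10 statements merged into one kernel-verified Lean document; each statement's English description precedes it below -/
import Mathlib

section
/- Let G be a connected graph with maximum degree Δ, second maximum degree Δ₂, and α ∈ [0,1]. Then λ₁(A_α(G)) ≤ (α(Δ+1) + Δ₂ - 1 + sqrt(α²(Δ+1)² + (Δ₂-1)² - 2α((Δ-1)Δ₂ + 3Δ + 1) + 4Δ))/2. -/
open Matrix SimpleGraph Finset

noncomputable def Aalpha {n : ℕ} (G : SimpleGraph (Fin n)) [DecidableRel G.Adj] (α : ℝ) :
    Matrix (Fin n) (Fin n) ℝ :=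
  α • Matrix.diagonal (fun i => (G.degree i : ℝ)) + (1 - α) • G.adjMatrix ℝ

/-!
Let `λ` be the largest eigenvalue of `A_α(G)`. Since `A_α(G)` is entrywise nonnegative, the
absolute value `y` of an eigenvector satisfies `λ y ≤ A_α(G) y`. Let `u` be a vertex where `y`
is largest and `w` one where `y` is largest among the others. If `d(u) ≤ Δ₂`, the row of `u`
gives `λ ≤ d(u) ≤ Δ₂`, which is below the bound. Otherwise `d(w) ≤ Δ₂`, and the rows of `u`
and `w` give `(λ - αΔ) y_u ≤ (1 - α) Δ y_w` and `(λ - (Δ₂ - 1 + α)) y_w ≤ (1 - α) y_u`.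
Multiplying them, `(λ - αΔ)(λ - (Δ₂ - 1 + α)) ≤ (1 - α)² Δ` unless
`λ ≤ max (αΔ) (Δ₂ - 1 + α)`; either way `λ` is at most the larger root of this quadratic,
which is the stated bound.
-/

/-- The larger root of `(t - p) * (t - q) = r`. -/
noncomputable def largerRoot (p q r : ℝ) : ℝ :=
  (p + q + √((p - q) ^ 2 + 4 * r)) / 2

lemma le_largerRoot {p q r t : ℝ} (h : (t - p) * (t - q) ≤ r) : t ≤ largerRoot p q r := by
  have hsq : (2 * t - p - q) ^ 2 ≤ (p - q) ^ 2 + 4 * r := by nlinarith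
  have : 2 * t - p - q ≤ √((p - q) ^ 2 + 4 * r) :=
    (le_abs_self _).trans (Real.abs_le_sqrt hsq)
  unfold largerRoot
  linarith

lemma max_le_largerRoot {p q r : ℝ} (hr : 0 ≤ r) : max p q ≤ largerRoot p q r :=
  le_largerRoot <| by rcases le_total p q with h | h <;> simp [h, hr]

lemma le_largerRoot_of_cross_le {p q r₁ r₂ t a b : ℝ} (ha : 0 < a) (hb : 0 ≤ b)
    (hr₁ : 0 ≤ r₁) (hr₂ : 0 ≤ r₂) (h₁ : (t - p) * a ≤ r₁ * b) (h₂ : (t - q) * b ≤ r₂ * a) :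
    t ≤ largerRoot p q (r₁ * r₂) := by
  by_cases ht : t ≤ max p q
  · exact ht.trans (max_le_largerRoot (mul_nonneg hr₁ hr₂))
  obtain ⟨htp, htq⟩ := max_lt_iff.mp (not_le.mp ht)
  have hb_pos : 0 < b := pos_of_mul_pos_right ((mul_pos (sub_pos.mpr htp) ha).trans_le h₁) hr₁
  refine le_largerRoot (le_of_mul_le_mul_right ?_ (mul_pos ha hb_pos))
  calc (t - p) * (t - q) * (a * b) = ((t - p) * a) * ((t - q) * b) := by ring
    _ ≤ (r₁ * b) * (r₂ * a) :=
      mul_le_mul h₁ h₂ (mul_nonneg (sub_pos.mpr htq).le hb) (mul_nonneg hr₁ hb)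
    _ = r₁ * r₂ * (a * b) := by ring

lemma smul_abs_le_mulVec_abs {ι : Type*} [Fintype ι] {A : Matrix ι ι ℝ} (hA : ∀ i j, 0 ≤ A i j)
    {μ : ℝ} {x : ι → ℝ} (hx : A *ᵥ x = μ • x) : μ • |x| ≤ A *ᵥ |x| := by
  intro i
  calc μ * |x i| ≤ |μ * x i| := by rw [abs_mul]; gcongr; exact le_abs_self μ
    _ = |∑ j, A i j * x j| := by rw [← smul_eq_mul, ← Pi.smul_apply, ← hx]; rfl
    _ ≤ ∑ j, |A i j * x j| := abs_sum_le_sum_abs _ _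
    _ = (A *ᵥ |x|) i := by simp [mulVec, dotProduct, abs_mul, abs_of_nonneg (hA i _)]

lemma apply_le_apply_of_antitone_comp {ι β : Type*} [Preorder ι] [Preorder β] {f : ι → β}
    {e : ι ≃ ι} (hf : Antitone fun k => f (e k)) {k v : ι} (hk : k ≤ e.symm v) : f v ≤ f (e k) := by
  simpa using hf hk

section Aalpha

variable {n : ℕ} (G : SimpleGraph (Fin n)) [DecidableRel G.Adj] {α : ℝ}

lemma Aalpha_nonneg (hα0 : 0 ≤ α) (hα1 : α ≤ 1) (i j : Fin n) : 0 ≤ Aalpha G α i j := by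
  have : 0 ≤ 1 - α := by linarith
  simp only [Aalpha, Matrix.add_apply, Matrix.smul_apply, diagonal_apply, adjMatrix_apply,
    smul_eq_mul]
  split_ifs <;> positivity

lemma Aalpha_mulVec_apply (y : Fin n → ℝ) (i : Fin n) :
    (Aalpha G α *ᵥ y) i = α * G.degree i * y i + (1 - α) * ∑ j ∈ G.neighborFinset i, y j := by
  simp [Aalpha, add_mulVec, smul_mulVec, mulVec_diagonal, adjMatrix_mulVec_apply, mul_assoc]

lemma sum_neighborFinset_le {i : Fin n} {y : Fin n → ℝ} {c : ℝ}
    (h : ∀ j ∈ G.neighborFinset i, y j ≤ c) : ∑ j ∈ G.neighborFinset i, y j ≤ G.degree i * c := by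
  have := sum_le_card_nsmul _ _ _ h
  rwa [nsmul_eq_mul, card_neighborFinset_eq_degree] at this

lemma sum_neighborFinset_le_add {i u : Fin n} {y : Fin n → ℝ} {c : ℝ} (hc : c ≤ y u)
    (h : ∀ v, v ≠ u → y v ≤ c) :
    ∑ j ∈ G.neighborFinset i, y j ≤ y u + (G.degree i - 1) * c := by
  have hpt : ∀ j ∈ G.neighborFinset i, y j ≤ c + if u = j then y u - c else 0 := by
    intro j _
    by_cases hj : u = j
    · simp [hj]
    · simpa [hj] using h j (Ne.symm hj)
  calc ∑ j ∈ G.neighborFinset i, y j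
      ≤ ∑ j ∈ G.neighborFinset i, (c + if u = j then y u - c else 0) := sum_le_sum hpt
    _ = G.degree i * c + if u ∈ G.neighborFinset i then y u - c else 0 := by
        rw [sum_add_distrib, sum_ite_eq, sum_const, nsmul_eq_mul, card_neighborFinset_eq_degree]
    _ ≤ y u + (G.degree i - 1) * c := by split_ifs <;> linarith

variable {G} {lam : ℝ} {y : Fin n → ℝ}

lemma sub_mul_le_of_le_Aalpha_mulVec (hα0 : 0 ≤ α) (hα1 : α ≤ 1)
    (hlam : lam • y ≤ Aalpha G α *ᵥ y) {i : Fin n} (hyi : 0 ≤ y i) {c : ℝ} (hc : 0 ≤ c)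
    (hnbr : ∀ j ∈ G.neighborFinset i, y j ≤ c) {D : ℝ} (hD : G.degree i ≤ D) :
    (lam - α * D) * y i ≤ (1 - α) * D * c := by
  have hrow := (hlam i).trans_eq (Aalpha_mulVec_apply G y i)
  simp only [Pi.smul_apply, smul_eq_mul] at hrow
  have h1α : 0 ≤ 1 - α := by linarith
  nlinarith [mul_le_mul_of_nonneg_left (sum_neighborFinset_le G hnbr) h1α,
    mul_le_mul_of_nonneg_left (mul_le_mul_of_nonneg_right hD hyi) hα0,
    mul_le_mul_of_nonneg_left (mul_le_mul_of_nonneg_right hD hc) h1α]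

lemma sub_mul_le_of_le_Aalpha_mulVec_of_forall_ne_le (hα0 : 0 ≤ α) (hα1 : α ≤ 1)
    (hlam : lam • y ≤ Aalpha G α *ᵥ y) {w u : Fin n} (hyw : 0 ≤ y w) (hwu : y w ≤ y u)
    (hw : ∀ v, v ≠ u → y v ≤ y w) {D : ℝ} (hD : G.degree w ≤ D) :
    (lam - (D - 1 + α)) * y w ≤ (1 - α) * y u := by
  have hrow := (hlam w).trans_eq (Aalpha_mulVec_apply G y w)
  simp only [Pi.smul_apply, smul_eq_mul] at hrow
  have h1α : 0 ≤ 1 - α := by linarith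
  nlinarith [mul_le_mul_of_nonneg_left (sum_neighborFinset_le_add G (i := w) hwu hw) h1α,
    mul_le_mul_of_nonneg_left (mul_le_mul_of_nonneg_right hD hyw) hα0,
    mul_le_mul_of_nonneg_left (mul_le_mul_of_nonneg_right hD hyw) h1α]

lemma le_largerRoot_of_le_Aalpha_mulVec (hα0 : 0 ≤ α) (hα1 : α ≤ 1) {Δ Δ₂ : ℕ}
    (hΔ₂Δ : Δ₂ ≤ Δ) (hdeg : ∀ v, G.degree v ≤ Δ)
    (hdeg₂ : ∀ u v, u ≠ v → G.degree u ≤ Δ₂ ∨ G.degree v ≤ Δ₂)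
    (hy0 : 0 ≤ y) (hy : y ≠ 0) (hlam : lam • y ≤ Aalpha G α *ᵥ y) :
    lam ≤ largerRoot (α * Δ) (Δ₂ - 1 + α) ((1 - α) * Δ * (1 - α)) := by
  have h1α : 0 ≤ 1 - α := by linarith
  obtain ⟨i, hi⟩ := Function.ne_iff.mp hy
  have : Nonempty (Fin n) := ⟨i⟩
  obtain ⟨u, hu⟩ := Finite.exists_max y
  have hyu : 0 < y u := (lt_of_le_of_ne (hy0 i) (Ne.symm hi)).trans_le (hu i)
  by_cases hdu : G.degree u ≤ Δ₂
  · have hlam_deg : lam ≤ G.degree u := by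
      have := sub_mul_le_of_le_Aalpha_mulVec hα0 hα1 hlam hyu.le hyu.le (fun j _ => hu j) le_rfl
      exact le_of_mul_le_mul_right (by nlinarith) hyu
    refine hlam_deg.trans ((Nat.cast_le.mpr hdu).trans (le_largerRoot ?_))
    have : (Δ₂ : ℝ) ≤ Δ := Nat.cast_le.mpr hΔ₂Δ
    nlinarith
  obtain ⟨v, huv⟩ := (G.degree_pos_iff_exists_adj u).mp (by omega)
  obtain ⟨w, hw_mem, hw⟩ := exists_max_image (univ.erase u) y ⟨v, by simp [huv.ne']⟩
  have hwu : w ≠ u := (mem_erase.mp hw_mem).1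
  have hw' : ∀ x, x ≠ u → y x ≤ y w := fun x hx => hw x (by simp [hx])
  have hdw : G.degree w ≤ Δ₂ := (hdeg₂ u w hwu.symm).resolve_left hdu
  refine le_largerRoot_of_cross_le hyu (hy0 w) (by positivity) h1α ?_ ?_
  · exact sub_mul_le_of_le_Aalpha_mulVec hα0 hα1 hlam hyu.le (hy0 w)
      (fun j hj => hw' j (by rintro rfl; simp at hj)) (Nat.cast_le.mpr (hdeg u))
  · exact sub_mul_le_of_le_Aalpha_mulVec_of_forall_ne_le hα0 hα1 hlam (hy0 w) (hu w) hw'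
      (Nat.cast_le.mpr hdw)

end Aalpha

theorem stmt2 {n : ℕ} (hn : 2 ≤ n) (G : SimpleGraph (Fin n)) [DecidableRel G.Adj]
    (α : ℝ) (hα0 : 0 ≤ α) (hα1 : α ≤ 1)
    (e : Fin n ≃ Fin n) (he : Antitone (fun k => G.degree (e k)))
    (Δ Δ₂ : ℕ) (hΔ : Δ = G.degree (e ⟨0, by omega⟩)) (hΔ₂ : Δ₂ = G.degree (e ⟨1, by omega⟩))
    (hH : (Aalpha G α).IsHermitian) :
    (⨆ i, hH.eigenvalues i) ≤
      (α * ((Δ : ℝ) + 1) + (Δ₂ : ℝ) - 1 +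
        Real.sqrt (α ^ 2 * ((Δ : ℝ) + 1) ^ 2 + ((Δ₂ : ℝ) - 1) ^ 2 -
          2 * α * (((Δ : ℝ) - 1) * (Δ₂ : ℝ) + 3 * (Δ : ℝ) + 1) + 4 * (Δ : ℝ))) / 2 := by
  have hsorted : ∀ {k v}, k ≤ e.symm v → G.degree v ≤ G.degree (e k) :=
    fun hk => apply_le_apply_of_antitone_comp (f := fun v => G.degree v) he hk
  have hdeg : ∀ v, G.degree v ≤ Δ :=
    fun v => hΔ ▸ hsorted (Fin.le_iff_val_le_val.mpr (Nat.zero_le _))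
  have hdeg₂ : ∀ u v, u ≠ v → G.degree u ≤ Δ₂ ∨ G.degree v ≤ Δ₂ := by
    intro u v huv
    rcases Nat.eq_zero_or_pos (e.symm u : ℕ) with hu | hu
    · have hv : (e.symm v : ℕ) ≠ 0 := fun hv => huv (e.symm.injective (Fin.ext (hu.trans hv.symm)))
      exact .inr (hΔ₂ ▸ hsorted (Fin.le_iff_val_le_val.mpr (Nat.one_le_iff_ne_zero.mpr hv)))
    · exact .inl (hΔ₂ ▸ hsorted (Fin.le_iff_val_le_val.mpr hu))
  have hΔ₂Δ : Δ₂ ≤ Δ := hΔ₂ ▸ hdeg _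
  have : Nonempty (Fin n) := ⟨⟨0, by omega⟩⟩
  obtain ⟨i₀, hi₀⟩ := exists_eq_ciSup_of_finite (f := hH.eigenvalues)
  set x := (hH.eigenvectorBasis i₀).ofLp
  have hx : x ≠ 0 := by
    simpa [x] using hH.eigenvectorBasis.orthonormal.ne_zero i₀
  have hbound := le_largerRoot_of_le_Aalpha_mulVec hα0 hα1 hΔ₂Δ hdeg hdeg₂ (abs_nonneg x)
    (by simpa [Pi.abs_eq_zero] using hx)
    (smul_abs_le_mulVec_abs (Aalpha_nonneg G hα0 hα1) (hH.mulVec_eigenvectorBasis i₀))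
  rw [← hi₀]
  refine hbound.trans_eq ?_
  unfold largerRoot
  ring_nf
end

section
/- Let G be a graph with n vertices, m edges, first Zagreb index Z₁ = Σᵢ dᵢ², and α ∈ [0,1]. Then λ₁(A_α(G)) ≤ (2αm + sqrt((n-1)(α²(-4m² + 2mn + nZ₁) - 4αmn + 2mn)))/n. -/
/-!
The eigenvalues `λᵢ` of `A_α(G)` satisfy `∑ λᵢ = tr A_α = 2αm` and
`∑ λᵢ² = tr A_α² = α² Z₁ + 2(1 - α)² m`, since the adjacency matrix has zero diagonal and
`(A²)ᵢᵢ = dᵢ`. Samuelson's inequality bounds each of `N` reals by their mean plus `√(N - 1)`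
times their standard deviation; for these two moments this is exactly the stated bound.
-/

open Matrix SimpleGraph Finset

theorem samuelson_inequality {ι : Type*} [Fintype ι] (f : ι → ℝ) (j : ι) :
    f j ≤ (∑ i, f i + √((Fintype.card ι - 1) *
      (Fintype.card ι * ∑ i, f i ^ 2 - (∑ i, f i) ^ 2))) / Fintype.card ι := by
  classical
  have hN : 0 < Fintype.card ι := Fintype.card_pos_iff.mpr ⟨j⟩
  have hcard : (#(univ.erase j) : ℝ) = Fintype.card ι - 1 := by
    rw [card_erase_of_mem (mem_univ j), card_univ, Nat.cast_pred hN]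
  have hsum := add_sum_erase univ f (mem_univ j)
  have hsum_sq := add_sum_erase univ (fun i => f i ^ 2) (mem_univ j)
  have hcs := sq_sum_le_card_mul_sum_sq (s := univ.erase j) (f := f)
  rw [hcard] at hcs
  -- `N` times Cauchy–Schwarz for the `N - 1` values other than `f j`
  have key : (Fintype.card ι * f j - ∑ i, f i) ^ 2 ≤
      (Fintype.card ι - 1) * (Fintype.card ι * ∑ i, f i ^ 2 - (∑ i, f i) ^ 2) := by
    rw [← hsum, ← hsum_sq]
    nlinarith [mul_le_mul_of_nonneg_left hcs (Nat.cast_nonneg (α := ℝ) (Fintype.card ι))]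
  rw [le_div_iff₀ (by exact_mod_cast hN)]
  linarith [Real.le_sqrt_of_sq_le key]

theorem Matrix.IsHermitian.trace_pow_eq_sum_eigenvalues_pow {𝕜 ι : Type*} [RCLike 𝕜]
    [Fintype ι] [DecidableEq ι] {A : Matrix ι ι 𝕜} (hA : A.IsHermitian) (k : ℕ) :
    (A ^ k).trace = ∑ i, (hA.eigenvalues i : 𝕜) ^ k := by
  conv_lhs => rw [hA.spectral_theorem, ← map_pow, Unitary.conjStarAlgAut_apply, trace_mul_cycle,
    Unitary.coe_star_mul_self, one_mul, diagonal_pow, trace_diagonal]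
  rfl

namespace SimpleGraph

variable {V R : Type*} [Fintype V] (G : SimpleGraph V) [DecidableRel G.Adj]

theorem trace_diagonal_mul_adjMatrix [DecidableEq V] [NonAssocSemiring R] (d : V → R) :
    (diagonal d * G.adjMatrix R).trace = 0 := by
  simp only [trace, Matrix.diag, diagonal_mul, adjMatrix_apply, G.irrefl, if_false, mul_zero,
    sum_const_zero]

theorem trace_adjMatrix_mul_diagonal [DecidableEq V] [NonAssocSemiring R] (d : V → R) :
    (G.adjMatrix R * diagonal d).trace = 0 := by
  simp only [trace, Matrix.diag, mul_diagonal, adjMatrix_apply, G.irrefl, if_false, zero_mul,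
    sum_const_zero]

theorem trace_adjMatrix_mul_self [NonAssocSemiring R] :
    (G.adjMatrix R * G.adjMatrix R).trace = 2 * #G.edgeFinset := by
  simp only [trace, Matrix.diag, adjMatrix_mul_self_apply_self]
  rw [← Nat.cast_sum, G.sum_degrees_eq_twice_card_edges, Nat.cast_mul, Nat.cast_ofNat]

end SimpleGraph

section

variable {n : ℕ} (G : SimpleGraph (Fin n)) [DecidableRel G.Adj] (α : ℝ)

theorem trace_Aalpha : (Aalpha G α).trace = α * (2 * #G.edgeFinset) := by
  have : ∑ i, (G.degree i : ℝ) = 2 * #G.edgeFinset := by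
    exact_mod_cast G.sum_degrees_eq_twice_card_edges
  simp [Aalpha, trace_add, this]

theorem trace_Aalpha_sq : (Aalpha G α ^ 2).trace =
    α ^ 2 * ∑ i, (G.degree i : ℝ) ^ 2 + (1 - α) ^ 2 * (2 * #G.edgeFinset) := by
  simp only [Aalpha, sq, add_mul, mul_add, smul_mul_smul, trace_add, trace_smul,
    diagonal_mul_diagonal, trace_diagonal, trace_diagonal_mul_adjMatrix,
    trace_adjMatrix_mul_diagonal, trace_adjMatrix_mul_self, smul_eq_mul, mul_zero]
  ring

end

theorem stmt3_general {n : ℕ} (hn : 0 < n) (G : SimpleGraph (Fin n)) [DecidableRel G.Adj]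
    (α : ℝ)
    (m : ℕ) (hm : m = G.edgeFinset.card)
    (Z₁ : ℝ) (hZ : Z₁ = ∑ i : Fin n, (G.degree i : ℝ) ^ 2)
    (hH : (Aalpha G α).IsHermitian) :
    (⨆ i, hH.eigenvalues i) ≤
      (2 * α * (m : ℝ) +
        Real.sqrt ((n - 1 : ℝ) *
          (α ^ 2 * (-4 * (m : ℝ) ^ 2 + 2 * m * n + n * Z₁) - 4 * α * m * n + 2 * m * n))) /
        (n : ℝ) := by
  have : Nonempty (Fin n) := Fin.pos_iff_nonempty.mp hn
  have hsum : ∑ i, hH.eigenvalues i = 2 * α * m := by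
    have h := hH.trace_eq_sum_eigenvalues
    simp only [RCLike.ofReal_real_eq_id, id] at h
    rw [← h, trace_Aalpha, hm]
    ring
  have hsum_sq : ∑ i, hH.eigenvalues i ^ 2 = α ^ 2 * Z₁ + (1 - α) ^ 2 * (2 * m) := by
    simpa [trace_Aalpha_sq, hm, hZ] using (hH.trace_pow_eq_sum_eigenvalues_pow 2).symm
  refine ciSup_le fun j => ?_
  refine (samuelson_inequality hH.eigenvalues j).trans_eq ?_
  rw [Fintype.card_fin, hsum, hsum_sq]
  ring_nf

theorem stmt3 {n : ℕ} (hn : 0 < n) (G : SimpleGraph (Fin n)) [DecidableRel G.Adj]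
    (α : ℝ) (hα0 : 0 ≤ α) (hα1 : α ≤ 1)
    (m : ℕ) (hm : m = G.edgeFinset.card)
    (Z₁ : ℝ) (hZ : Z₁ = ∑ i : Fin n, (G.degree i : ℝ) ^ 2)
    (hH : (Aalpha G α).IsHermitian) :
    (⨆ i, hH.eigenvalues i) ≤
      (2 * α * (m : ℝ) +
        Real.sqrt ((n - 1 : ℝ) *
          (α ^ 2 * (-4 * (m : ℝ) ^ 2 + 2 * m * n + n * Z₁) - 4 * α * m * n + 2 * m * n))) /
        (n : ℝ) :=
  stmt3_general hn G α m hm Z₁ hZ hH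
end

section
/- For the complete graph Kₙ with n ≥ 1, equality holds in the bound λ₁(A_α(G)) ≤ (2αm + sqrt((n-1)(α²(-4m² + 2mn + nZ₁) - 4αmn + 2mn)))/n; that is, for G = Kₙ with m = n(n-1)/2 and Z₁ = n(n-1)², the right-hand side equals n-1 = λ₁(A_α(Kₙ)). -/
open Matrix SimpleGraph Finset

/-
For a `d`-regular graph, `A_α = D - (1 - α) L = d • 1 - (1 - α) L` with `L` the Laplacian.
Since `L` is positive semidefinite and kills the constant vectors, `d` is an eigenvalue of `A_α`
and, for `α ≤ 1`, every eigenvalue is at most `d`. `K_n` is `(n - 1)`-regular, and for it the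
radicand of the bound is the perfect square `(n (n - 1) (1 - α))²`.
-/

namespace Matrix

variable {ι : Type*} [Fintype ι] [DecidableEq ι]

theorem le_of_posSemidef_smul_one_sub {A : Matrix ι ι ℝ} {d μ : ℝ} (hA : (d • 1 - A).PosSemidef)
    {v : ι → ℝ} (hv : v ≠ 0) (hμ : A *ᵥ v = μ • v) : μ ≤ d := by
  have hquad : 0 ≤ (d - μ) * (v ⬝ᵥ v) := by
    have := hA.dotProduct_mulVec_nonneg v
    rwa [star_trivial, sub_mulVec, smul_mulVec, one_mulVec, hμ, ← sub_smul, dotProduct_smul,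
      smul_eq_mul] at this
  have hpos : 0 < v ⬝ᵥ v := by simpa using dotProduct_star_self_pos_iff.mpr hv
  linarith [nonneg_of_mul_nonneg_left hquad hpos]

theorem IsHermitian.eigenvalues_le_of_posSemidef_smul_one_sub {A : Matrix ι ι ℝ}
    (hA : A.IsHermitian) {d : ℝ} (hd : (d • 1 - A).PosSemidef) (i : ι) :
    hA.eigenvalues i ≤ d :=
  le_of_posSemidef_smul_one_sub hd
    ((WithLp.ofLp_eq_zero 2).ne.2 <| hA.eigenvectorBasis.orthonormal.ne_zero i)
    (hA.mulVec_eigenvectorBasis i)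

theorem IsHermitian.exists_eigenvalues_eq_of_mulVec_eq_smul {A : Matrix ι ι ℝ}
    (hA : A.IsHermitian) {μ : ℝ} {v : ι → ℝ} (hv : v ≠ 0) (hμ : A *ᵥ v = μ • v) :
    ∃ i, hA.eigenvalues i = μ := by
  have hμ' : Module.End.HasEigenvalue (toLin' A) μ :=
    Module.End.hasEigenvalue_of_hasEigenvector ⟨Module.End.mem_eigenspace_iff.mpr hμ, hv⟩
  rw [← Set.mem_range, ← hA.spectrum_real_eq_range_eigenvalues, ← spectrum_toLin']
  exact hμ'.mem_spectrum

end Matrix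

theorem Aalpha_eq_degMatrix_sub_lapMatrix {n : ℕ} (G : SimpleGraph (Fin n)) [DecidableRel G.Adj]
    (α : ℝ) : Aalpha G α = G.degMatrix ℝ - (1 - α) • G.lapMatrix ℝ := by
  rw [Aalpha, lapMatrix, ← degMatrix]
  module

theorem Aalpha_eq_of_isRegularOfDegree {n d : ℕ} {G : SimpleGraph (Fin n)} [DecidableRel G.Adj]
    (hG : G.IsRegularOfDegree d) (α : ℝ) :
    Aalpha G α = (d : ℝ) • 1 - (1 - α) • G.lapMatrix ℝ := by
  rw [Aalpha_eq_degMatrix_sub_lapMatrix, degMatrix, funext fun v => congrArg Nat.cast (hG v),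
    ← smul_one_eq_diagonal]

theorem iSup_eigenvalues_Aalpha_of_isRegularOfDegree {n d : ℕ} [NeZero n]
    {G : SimpleGraph (Fin n)} [DecidableRel G.Adj] (hG : G.IsRegularOfDegree d) {α : ℝ}
    (hα : α ≤ 1) (hH : (Aalpha G α).IsHermitian) : (⨆ i, hH.eigenvalues i) = d := by
  have hpsd : ((d : ℝ) • 1 - Aalpha G α).PosSemidef := by
    rw [Aalpha_eq_of_isRegularOfDegree hG, sub_sub_cancel]
    exact (G.posSemidef_lapMatrix ℝ).smul (sub_nonneg.mpr hα)
  have hconst : Aalpha G α *ᵥ (fun _ => 1) = (d : ℝ) • fun _ => 1 := by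
    rw [Aalpha_eq_of_isRegularOfDegree hG, sub_mulVec, smul_mulVec, one_mulVec, smul_mulVec,
      lapMatrix_mulVec_const_eq_zero, smul_zero, sub_zero]
  obtain ⟨i, hi⟩ := hH.exists_eigenvalues_eq_of_mulVec_eq_smul
    (Function.ne_iff.mpr ⟨0, one_ne_zero⟩) hconst
  exact le_antisymm (ciSup_le (hH.eigenvalues_le_of_posSemidef_smul_one_sub hpsd))
    (hi ▸ le_ciSup (Set.finite_range _).bddAbove i)

theorem stmt4_general {n : ℕ} (hn : 1 ≤ n)
    (α : ℝ) (hα1 : α ≤ 1)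
    (m Z₁ : ℝ) (hm : m = (n : ℝ) * ((n : ℝ) - 1) / 2) (hZ : Z₁ = (n : ℝ) * ((n : ℝ) - 1) ^ 2)
    (hH : (Aalpha (⊤ : SimpleGraph (Fin n)) α).IsHermitian) :
    (2 * α * m +
        Real.sqrt ((n - 1 : ℝ) *
          (α ^ 2 * (-4 * m ^ 2 + 2 * m * n + n * Z₁) - 4 * α * m * n + 2 * m * n))) /
        (n : ℝ) = (n : ℝ) - 1 ∧
      (⨆ i, hH.eigenvalues i) = (n : ℝ) - 1 := by
  have hn1 : (1 : ℝ) ≤ n := by exact_mod_cast hn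
  have : NeZero n := ⟨by omega⟩
  constructor
  · have hsq : (n - 1 : ℝ) *
        (α ^ 2 * (-4 * m ^ 2 + 2 * m * n + n * Z₁) - 4 * α * m * n + 2 * m * n)
        = ((n : ℝ) * ((n : ℝ) - 1) * (1 - α)) ^ 2 := by
      subst hm hZ; ring
    have hroot_nonneg : 0 ≤ (n : ℝ) * ((n : ℝ) - 1) * (1 - α) := by
      have := sub_nonneg.mpr hα1; positivity
    rw [hsq, Real.sqrt_sq hroot_nonneg, hm]
    field_simp
    ring
  · have hreg := IsRegularOfDegree.top (V := Fin n)
    rw [iSup_eigenvalues_Aalpha_of_isRegularOfDegree hreg hα1, Fintype.card_fin, Nat.cast_sub hn,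
      Nat.cast_one]

theorem stmt4 {n : ℕ} (hn : 1 ≤ n)
    (α : ℝ) (hα0 : 0 ≤ α) (hα1 : α ≤ 1)
    (m Z₁ : ℝ) (hm : m = (n : ℝ) * ((n : ℝ) - 1) / 2) (hZ : Z₁ = (n : ℝ) * ((n : ℝ) - 1) ^ 2)
    (hH : (Aalpha (⊤ : SimpleGraph (Fin n)) α).IsHermitian) :
    (2 * α * m +
        Real.sqrt ((n - 1 : ℝ) *
          (α ^ 2 * (-4 * m ^ 2 + 2 * m * n + n * Z₁) - 4 * α * m * n + 2 * m * n))) /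
        (n : ℝ) = (n : ℝ) - 1 ∧
      (⨆ i, hH.eigenvalues i) = (n : ℝ) - 1 :=
  stmt4_general hn α hα1 m Z₁ hm hZ hH
end

section
/- Let G be a graph on n vertices with maximum degree Δ, clique number ω ≥ 1, and α ∈ [0,1]. Then λ₁(A_α(G)) ≤ αΔ + (1-α)(1 - 1/ω)n. -/
/-!
The quadratic form of `A_α(G)` is `α ∑ dᵢ xᵢ² + (1 - α) xᵀAx`. The degree part is at most
`Δ ‖x‖²`, and `xᵀAx ≤ |x|ᵀA|x| ≤ (1 - 1/ω) (∑ |xᵢ|)² ≤ (1 - 1/ω) n ‖x‖²` by Motzkin–Straus and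
Cauchy–Schwarz; an eigenvalue is the value of the form at a unit eigenvector.

Motzkin–Straus goes by induction on the support of a nonnegative `x`. If the support contains
non-adjacent `i, j`, the form is affine along `eᵢ - eⱼ`, so moving the whole weight of one of them
onto the other keeps `∑ xᵢ`, shrinks the support and does not decrease `xᵀAx`. If the support is
a clique, `xᵀAx ≤ (∑ xᵢ)² - ∑ xᵢ²` and Cauchy–Schwarz over at most `ω` terms conclude.
-/

open Matrix SimpleGraph Finset

lemma one_sub_one_div_natCast_nonneg (n : ℕ) : (0 : ℝ) ≤ 1 - 1 / n :=
  sub_nonneg.2 (by simpa using Nat.cast_inv_le_one n)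

namespace Matrix

variable {ι : Type*} [Fintype ι] {M : Matrix ι ι ℝ}

lemma dotProduct_mulVec_nonneg_of_nonneg (hM : ∀ i j, 0 ≤ M i j) {x : ι → ℝ} (hx : 0 ≤ x) :
    0 ≤ x ⬝ᵥ (M *ᵥ x) :=
  sum_nonneg fun i _ => mul_nonneg (hx i) <| sum_nonneg fun j _ => mul_nonneg (hM i j) (hx j)

lemma dotProduct_mulVec_le_abs (hM : ∀ i j, 0 ≤ M i j) (x : ι → ℝ) :
    x ⬝ᵥ (M *ᵥ x) ≤ |x| ⬝ᵥ (M *ᵥ |x|) := by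
  simp only [dotProduct, mulVec, mul_sum]
  refine sum_le_sum fun i _ => sum_le_sum fun j _ => ?_
  calc x i * (M i j * x j) ≤ |x i * (M i j * x j)| := le_abs_self _
    _ = |x| i * (M i j * |x| j) := by simp [abs_mul, abs_of_nonneg (hM i j)]

lemma dotProduct_of_one_mulVec (x : ι → ℝ) : x ⬝ᵥ (of 1 *ᵥ x) = (∑ i, x i) ^ 2 := by
  simp [dotProduct, mulVec, sq, sum_mul]

end Matrix

namespace SimpleGraph

variable {V : Type*} (G : SimpleGraph V) [DecidableRel G.Adj]

lemma adjMatrix_nonneg (i j : V) : 0 ≤ G.adjMatrix ℝ i j := by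
  rw [adjMatrix_apply]; split_ifs <;> norm_num

variable [Fintype V] [DecidableEq V]

lemma dotProduct_adjMatrix_mulVec_le_sq_sum_sub_sum_sq {x : V → ℝ} (hx : 0 ≤ x) :
    x ⬝ᵥ (G.adjMatrix ℝ *ᵥ x) ≤ (∑ i, x i) ^ 2 - ∑ i, x i ^ 2 := by
  have hA : G.adjMatrix ℝ = of 1 - 1 - Gᶜ.adjMatrix ℝ := by
    rw [← G.one_add_adjMatrix_add_compl_adjMatrix_eq_of_one ℝ, compl_adjMatrix_eq_adjMatrix_compl]
    abel
  have hcompl := dotProduct_mulVec_nonneg_of_nonneg Gᶜ.adjMatrix_nonneg hx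
  rw [hA, sub_mulVec, sub_mulVec, dotProduct_sub, dotProduct_sub, dotProduct_of_one_mulVec,
    one_mulVec]
  simp only [dotProduct, sq] at hcompl ⊢
  linarith

lemma dotProduct_adjMatrix_mulVec_le_of_isClique {x : V → ℝ} (hx : 0 ≤ x)
    (hclique : G.IsClique (({i | x i ≠ 0} : Finset V) : Set V)) :
    x ⬝ᵥ (G.adjMatrix ℝ *ᵥ x) ≤ (1 - 1 / (G.cliqueNum : ℝ)) * (∑ i, x i) ^ 2 := by
  set s : Finset V := {i | x i ≠ 0}
  have hsum : ∑ i, x i = ∑ i ∈ s, x i := (sum_filter_ne_zero _).symm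
  have hsum_sq : ∑ i, x i ^ 2 = ∑ i ∈ s, x i ^ 2 :=
    (sum_filter_of_ne fun i _ h => by simpa using h).symm
  have hcauchy : (∑ i, x i) ^ 2 ≤ G.cliqueNum * ∑ i, x i ^ 2 := by
    rw [hsum, hsum_sq]
    calc (∑ i ∈ s, x i) ^ 2 ≤ #s * ∑ i ∈ s, x i ^ 2 := sq_sum_le_card_mul_sum_sq
      _ ≤ G.cliqueNum * ∑ i ∈ s, x i ^ 2 := by
        gcongr
        exact hclique.card_le_cliqueNum
  have hquot : (∑ i, x i) ^ 2 / G.cliqueNum ≤ ∑ i, x i ^ 2 :=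
    div_le_of_le_mul₀ (Nat.cast_nonneg _) (by positivity) (by rwa [mul_comm])
  calc x ⬝ᵥ (G.adjMatrix ℝ *ᵥ x) ≤ (∑ i, x i) ^ 2 - ∑ i, x i ^ 2 :=
        G.dotProduct_adjMatrix_mulVec_le_sq_sum_sub_sum_sq hx
    _ ≤ (∑ i, x i) ^ 2 - (∑ i, x i) ^ 2 / G.cliqueNum := by gcongr
    _ = (1 - 1 / (G.cliqueNum : ℝ)) * (∑ i, x i) ^ 2 := by ring

lemma dotProduct_adjMatrix_mulVec_add_smul_single_sub_single {i j : V}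
    (hadj : ¬G.Adj i j) (x : V → ℝ) (t : ℝ) :
    (x + t • (Pi.single i 1 - Pi.single j 1)) ⬝ᵥ
        (G.adjMatrix ℝ *ᵥ (x + t • (Pi.single i 1 - Pi.single j 1))) =
      x ⬝ᵥ (G.adjMatrix ℝ *ᵥ x) + 2 * t * ((G.adjMatrix ℝ *ᵥ x) i - (G.adjMatrix ℝ *ᵥ x) j) := by
  set d : V → ℝ := Pi.single i 1 - Pi.single j 1
  have hdx : d ⬝ᵥ (G.adjMatrix ℝ *ᵥ x) = (G.adjMatrix ℝ *ᵥ x) i - (G.adjMatrix ℝ *ᵥ x) j := by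
    simp [d, sub_dotProduct, single_dotProduct]
  have hxd : x ⬝ᵥ (G.adjMatrix ℝ *ᵥ d) = d ⬝ᵥ (G.adjMatrix ℝ *ᵥ x) := by
    rw [dotProduct_mulVec, ← mulVec_transpose, transpose_adjMatrix, dotProduct_comm]
  have hdd : d ⬝ᵥ (G.adjMatrix ℝ *ᵥ d) = 0 := by
    simp [d, mulVec_sub, mulVec_single, sub_dotProduct, dotProduct_sub, single_dotProduct, hadj,
      G.adj_comm j i]
  rw [mulVec_add, mulVec_smul, add_dotProduct, dotProduct_add, dotProduct_add, smul_dotProduct,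
    smul_dotProduct, dotProduct_smul, dotProduct_smul, hxd, hdx, hdd, smul_eq_mul, smul_eq_mul]
  ring

lemma exists_shift_of_not_adj {x : V → ℝ} (hx : 0 ≤ x) {i j : V} (hi : x i ≠ 0) (hj : x j ≠ 0)
    (hij : i ≠ j) (hadj : ¬G.Adj i j) :
    ∃ z : V → ℝ, 0 ≤ z ∧ ∑ k, z k = ∑ k, x k ∧ #{k | z k ≠ 0} < #{k | x k ≠ 0} ∧
      x ⬝ᵥ (G.adjMatrix ℝ *ᵥ x) ≤ z ⬝ᵥ (G.adjMatrix ℝ *ᵥ z) := by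
  wlog hle : (G.adjMatrix ℝ *ᵥ x) j ≤ (G.adjMatrix ℝ *ᵥ x) i generalizing i j
  · exact this hj hi hij.symm (fun h => hadj h.symm) (le_of_not_ge hle)
  refine ⟨x + x j • (Pi.single i 1 - Pi.single j 1), fun k => ?_, ?_, ?_, ?_⟩
  · rcases eq_or_ne k i with rfl | hki
    · simpa [hij] using add_nonneg (hx k) (hx j)
    · rcases eq_or_ne k j with rfl | hkj
      · simp [hki]
      · simpa [hki, hkj] using hx k
  · simp [sum_add_distrib, ← mul_sum]
  · refine card_lt_card ⟨fun k hk => ?_, fun h => by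
      simpa [hij.symm] using h (mem_filter.2 ⟨mem_univ j, hj⟩)⟩
    rcases eq_or_ne k i with rfl | hki
    · simpa using hi
    · rcases eq_or_ne k j with rfl | hkj
      · simp [hki] at hk
      · simpa [hki, hkj] using hk
  · rw [dotProduct_adjMatrix_mulVec_add_smul_single_sub_single G hadj]
    nlinarith [mul_nonneg (hx j) (sub_nonneg.2 hle)]

theorem dotProduct_adjMatrix_mulVec_le_of_nonneg {x : V → ℝ} (hx : 0 ≤ x) :
    x ⬝ᵥ (G.adjMatrix ℝ *ᵥ x) ≤ (1 - 1 / (G.cliqueNum : ℝ)) * (∑ i, x i) ^ 2 := by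
  induction hk : #{i | x i ≠ 0} using Nat.strong_induction_on generalizing x with
  | _ k ih =>
  by_cases hclique : G.IsClique (({i | x i ≠ 0} : Finset V) : Set V)
  · exact G.dotProduct_adjMatrix_mulVec_le_of_isClique hx hclique
  obtain ⟨i, hi, j, hj, hij, hadj⟩ : ∃ i, x i ≠ 0 ∧ ∃ j, x j ≠ 0 ∧ i ≠ j ∧ ¬G.Adj i j := by
    simpa [IsClique, Set.Pairwise] using hclique
  obtain ⟨z, hz, hsum, hcard, hle⟩ := G.exists_shift_of_not_adj hx hi hj hij hadj
  calc x ⬝ᵥ (G.adjMatrix ℝ *ᵥ x) ≤ z ⬝ᵥ (G.adjMatrix ℝ *ᵥ z) := hle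
    _ ≤ (1 - 1 / (G.cliqueNum : ℝ)) * (∑ i, z i) ^ 2 := ih _ (hk ▸ hcard) hz rfl
    _ = (1 - 1 / (G.cliqueNum : ℝ)) * (∑ i, x i) ^ 2 := by rw [hsum]

lemma dotProduct_adjMatrix_mulVec_le_card_mul (x : V → ℝ) :
    x ⬝ᵥ (G.adjMatrix ℝ *ᵥ x) ≤ (1 - 1 / (G.cliqueNum : ℝ)) * Fintype.card V * (x ⬝ᵥ x) := by
  have hω := one_sub_one_div_natCast_nonneg G.cliqueNum
  have hcauchy : (∑ i, |x| i) ^ 2 ≤ Fintype.card V * (x ⬝ᵥ x) := by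
    simpa [dotProduct, ← sq] using sq_sum_le_card_mul_sum_sq (s := univ) (f := |x|)
  calc x ⬝ᵥ (G.adjMatrix ℝ *ᵥ x) ≤ |x| ⬝ᵥ (G.adjMatrix ℝ *ᵥ |x|) :=
        dotProduct_mulVec_le_abs G.adjMatrix_nonneg x
    _ ≤ (1 - 1 / (G.cliqueNum : ℝ)) * (∑ i, |x| i) ^ 2 :=
        G.dotProduct_adjMatrix_mulVec_le_of_nonneg (abs_nonneg x)
    _ ≤ (1 - 1 / (G.cliqueNum : ℝ)) * (Fintype.card V * (x ⬝ᵥ x)) := by gcongr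
    _ = (1 - 1 / (G.cliqueNum : ℝ)) * Fintype.card V * (x ⬝ᵥ x) := by ring

lemma dotProduct_diagonal_degree_mulVec_le (x : V → ℝ) :
    x ⬝ᵥ (diagonal (fun i => (G.degree i : ℝ)) *ᵥ x) ≤ G.maxDegree * (x ⬝ᵥ x) := by
  simp only [dotProduct, mulVec_diagonal, mul_sum]
  refine sum_le_sum fun i _ => ?_
  rw [mul_left_comm]
  exact mul_le_mul_of_nonneg_right (by exact_mod_cast G.degree_le_maxDegree i) (mul_self_nonneg _)

end SimpleGraph

lemma Matrix.IsHermitian.eigenvalues_le_of_dotProduct_mulVec_le {ι : Type*} [Fintype ι]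
    [DecidableEq ι] {A : Matrix ι ι ℝ} (hA : A.IsHermitian) {c : ℝ}
    (h : ∀ v, v ⬝ᵥ (A *ᵥ v) ≤ c * (v ⬝ᵥ v)) (i : ι) : hA.eigenvalues i ≤ c := by
  have hunit : ⇑(hA.eigenvectorBasis i) ⬝ᵥ ⇑(hA.eigenvectorBasis i) = 1 := by
    have h := real_inner_self_eq_norm_sq (hA.eigenvectorBasis i)
    rwa [EuclideanSpace.inner_eq_star_dotProduct, star_trivial,
      hA.eigenvectorBasis.orthonormal.1 i, one_pow] at h
  simpa [hA.eigenvalues_eq i, hunit] using h (hA.eigenvectorBasis i)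

theorem stmt5_general {n : ℕ} (G : SimpleGraph (Fin n)) [DecidableRel G.Adj]
    (α : ℝ) (hα0 : 0 ≤ α) (hα1 : α ≤ 1)
    (Δ ω : ℕ) (hΔ : Δ = G.maxDegree) (hω : ω = G.cliqueNum)
    (hH : (Aalpha G α).IsHermitian) :
    (⨆ i, hH.eigenvalues i) ≤ α * (Δ : ℝ) + (1 - α) * (1 - 1 / (ω : ℝ)) * (n : ℝ) := by
  subst hΔ hω
  have hquad : ∀ v, v ⬝ᵥ (Aalpha G α *ᵥ v) ≤
      (α * G.maxDegree + (1 - α) * (1 - 1 / (G.cliqueNum : ℝ)) * n) * (v ⬝ᵥ v) := by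
    intro v
    have hdeg := G.dotProduct_diagonal_degree_mulVec_le v
    have hadj := G.dotProduct_adjMatrix_mulVec_le_card_mul v
    rw [Fintype.card_fin] at hadj
    rw [Aalpha, add_mulVec, smul_mulVec, smul_mulVec, dotProduct_add, dotProduct_smul,
      dotProduct_smul, smul_eq_mul, smul_eq_mul]
    calc α * _ + (1 - α) * _ ≤ α * (G.maxDegree * (v ⬝ᵥ v)) +
          (1 - α) * ((1 - 1 / (G.cliqueNum : ℝ)) * n * (v ⬝ᵥ v)) := by
          gcongr
      _ = _ := by ring
  exact Real.iSup_le (hH.eigenvalues_le_of_dotProduct_mulVec_le hquad) (by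
    have := mul_nonneg (sub_nonneg.2 hα1) (one_sub_one_div_natCast_nonneg G.cliqueNum)
    positivity)

theorem stmt5 {n : ℕ} (G : SimpleGraph (Fin n)) [DecidableRel G.Adj]
    (α : ℝ) (hα0 : 0 ≤ α) (hα1 : α ≤ 1)
    (Δ ω : ℕ) (hΔ : Δ = G.maxDegree) (hω : ω = G.cliqueNum) (hω1 : 1 ≤ ω)
    (hH : (Aalpha G α).IsHermitian) :
    (⨆ i, hH.eigenvalues i) ≤ α * (Δ : ℝ) + (1 - α) * (1 - 1 / (ω : ℝ)) * (n : ℝ) :=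
  stmt5_general G α hα0 hα1 Δ ω hΔ hω hH
end

section
/- Let G be a non-bipartite graph on n vertices with diameter D, maximum degree Δ, and α ∈ [0,1]. Then the smallest eigenvalue satisfies λₙ(A_α(G)) ≥ -Δ + (1+α)/(n(D+1)). -/
open Matrix SimpleGraph Finset

/-!
For a unit vector `x`, write `W = ∑_{uv ∈ E} (x u + x v)² = xᵀDx + xᵀAx`. Then
`xᵀ A_α x + Δ = (1 - α) W + (1 - α) (Δ - xᵀDx) + α (Δ + xᵀDx)`, and `Δ + xᵀDx ≥ 2` because a
connected graph on at least two vertices has no isolated vertex, so it suffices to show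
`W ≥ 1 / (n (D + 1))`.

Pick `p` with `x p² ≥ 1 / n`. As `G` is not bipartite, the signs of `x` are not a proper
2-colouring, so some edge `ab` has `x a * x b ≥ 0`, and we may take `|x a| ≤ |x b|`. Along a
shortest path from `p` to `a` (of length at most `D`), Cauchy–Schwarz gives
`x p² ≤ (D + 1) (∑_path (|x u| - |x v|)² + x a²)`. Each path term is at most `(x u + x v)²`, and
`(|x a| - |x b|)² + x a² ≤ (x a + x b)²`, so, the path having distinct edges, the right-hand side
is at most `(D + 1) W`.
-/

lemma Finset.sum_add_le_sum_of_subset {ι : Type*} [DecidableEq ι] {s t : Finset ι} {f g : ι → ℝ}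
    {i : ι} {c : ℝ} (hst : s ⊆ t) (hi : i ∈ t) (hg : ∀ j ∈ t, 0 ≤ g j) (hgf : ∀ j ∈ t, g j ≤ f j)
    (hc : g i + c ≤ f i) :
    ∑ j ∈ s, g j + c ≤ ∑ j ∈ t, f j := by
  have hsub : insert i s ⊆ t := insert_subset hi hst
  have hmem : i ∈ insert i s := mem_insert_self i s
  calc ∑ j ∈ s, g j + c ≤ ∑ j ∈ insert i s, g j + c :=
        add_le_add_left (sum_le_sum_of_subset_of_nonneg (subset_insert i s)
          fun j hj _ => hg j (hsub hj)) c
    _ = ∑ j ∈ (insert i s).erase i, g j + (g i + c) := by rw [← add_sum_erase _ _ hmem]; ring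
    _ ≤ ∑ j ∈ (insert i s).erase i, f j + f i := by
        gcongr with j hj
        exact hgf j (hsub (mem_of_mem_erase hj))
    _ = ∑ j ∈ insert i s, f j := sum_erase_add _ _ hmem
    _ ≤ ∑ j ∈ t, f j := sum_le_sum_of_subset_of_nonneg hsub fun j hj _ => (hg j hj).trans (hgf j hj)

lemma exists_one_le_card_mul_sq {ι : Type*} [Fintype ι] {x : ι → ℝ} (hx : x ⬝ᵥ x = 1) :
    ∃ p, 1 ≤ Fintype.card ι * x p ^ 2 := by
  have hne : (univ : Finset ι).Nonempty := nonempty_of_sum_ne_zero (hx.trans_ne one_ne_zero)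
  obtain ⟨p, -, hp⟩ := exists_le_of_sum_le hne (f := fun _ => (1 : ℝ))
    (g := fun p => Fintype.card ι * x p ^ 2) (by simp_rw [← mul_sum, ← hx, dotProduct, sq]; simp)
  exact ⟨p, hp⟩

lemma Matrix.IsHermitian.le_eigenvalues {n : Type*} [Fintype n] [DecidableEq n]
    {A : Matrix n n ℝ} (hA : A.IsHermitian) {c : ℝ}
    (h : ∀ x : n → ℝ, x ⬝ᵥ x = 1 → c ≤ x ⬝ᵥ (A *ᵥ x)) (i : n) : c ≤ hA.eigenvalues i := by
  have hunit : ⇑(hA.eigenvectorBasis i) ⬝ᵥ ⇑(hA.eigenvectorBasis i) = 1 := by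
    have := real_inner_self_eq_norm_sq (hA.eigenvectorBasis i)
    rw [hA.eigenvectorBasis.orthonormal.1 i, one_pow, EuclideanSpace.inner_eq_star_dotProduct] at this
    simpa using this
  simpa [hA.eigenvalues_eq i] using h _ hunit

namespace SimpleGraph

variable {V : Type*}

def edgeSumSq (x : V → ℝ) : Sym2 V → ℝ :=
  Sym2.lift ⟨fun a b => (x a + x b) ^ 2, fun _ _ => by ring⟩

def edgeDiffSq (y : V → ℝ) : Sym2 V → ℝ :=
  Sym2.lift ⟨fun a b => (y a - y b) ^ 2, fun _ _ => by ring⟩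

@[simp] lemma edgeSumSq_mk (x : V → ℝ) (a b : V) : edgeSumSq x s(a, b) = (x a + x b) ^ 2 := rfl

@[simp] lemma edgeDiffSq_mk (y : V → ℝ) (a b : V) : edgeDiffSq y s(a, b) = (y a - y b) ^ 2 := rfl

lemma edgeDiffSq_nonneg (y : V → ℝ) (e : Sym2 V) : 0 ≤ edgeDiffSq y e := by
  induction e using Sym2.inductionOn with
  | hf a b => exact sq_nonneg _

lemma edgeDiffSq_abs_le_edgeSumSq (x : V → ℝ) (e : Sym2 V) :
    edgeDiffSq (|x ·|) e ≤ edgeSumSq x e := by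
  induction e using Sym2.inductionOn with
  | hf a b =>
    simpa [sub_neg_eq_add] using sq_le_sq.2 (abs_abs_sub_abs_le_abs_sub (x a) (-x b))

lemma edgeDiffSq_abs_add_sq_le_edgeSumSq (x : V → ℝ) {a b : V} (hab : 0 ≤ x a * x b)
    (hle : |x a| ≤ |x b|) : edgeDiffSq (|x ·|) s(a, b) + x a ^ 2 ≤ edgeSumSq x s(a, b) := by
  have hprod : |x a| * |x b| = x a * x b := by rw [← abs_mul, abs_of_nonneg hab]
  simp only [edgeDiffSq_mk, edgeSumSq_mk]
  nlinarith [sq_abs (x a), sq_abs (x b), mul_le_mul_of_nonneg_left hle (abs_nonneg (x a))]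

lemma Walk.sq_le_length_succ_mul {G : SimpleGraph V} (y : V → ℝ) {u v : V} (w : G.Walk u v) :
    y u ^ 2 ≤ (w.length + 1) * ((w.edges.map (edgeDiffSq y)).sum + y v ^ 2) := by
  induction w with
  | nil => simp
  | @cons u u' v h w ih =>
    simp only [Walk.length_cons, Walk.edges_cons, List.map_cons, List.sum_cons, edgeDiffSq_mk]
    push_cast
    set k : ℝ := (w.length : ℝ)
    set B := (w.edges.map (edgeDiffSq y)).sum + y v ^ 2
    have hk : 0 < k + 1 := by positivity
    -- Cauchy–Schwarz for `y u = (y u - y u') + y u'` with weights `1` and `k + 1`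
    have hcs : (k + 1) * y u ^ 2 ≤ (k + 1) * ((k + 1 + 1) * ((y u - y u') ^ 2 + B)) := by
      nlinarith [sq_nonneg ((k + 1) * (y u - y u') - y u')]
    linarith [le_of_mul_le_mul_left hcs hk]

lemma exists_adj_mul_nonneg_of_not_colorable_two {G : SimpleGraph V} (hG : ¬ G.Colorable 2)
    (x : V → ℝ) : ∃ a b, G.Adj a b ∧ 0 ≤ x a * x b := by
  by_contra! h
  refine hG (Coloring.colorable (α := Bool) (Coloring.mk (fun v => decide (0 < x v)) ?_))
  intro a b hab heq
  rw [decide_eq_decide] at heq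
  by_cases ha : 0 < x a
  · exact (h a b hab).not_ge (mul_pos ha (heq.1 ha)).le
  · exact (h a b hab).not_ge
      (mul_nonneg_of_nonpos_of_nonpos (not_lt.1 ha) (not_lt.1 (mt heq.2 ha)))

lemma nontrivial_of_not_colorable_two {G : SimpleGraph V} (hG : ¬ G.Colorable 2) :
    Nontrivial V := by
  by_contra hV
  rw [not_nontrivial_iff_subsingleton] at hV
  exact hG ⟨Coloring.mk (fun _ => 0) fun hab => (G.ne_of_adj hab (Subsingleton.elim _ _)).elim⟩

variable [Fintype V] (G : SimpleGraph V) [DecidableRel G.Adj]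

lemma sum_dart_eq_sum_sum_adj {M : Type*} [AddCommMonoid M] (f : V → V → M) :
    ∑ d : G.Dart, f d.fst d.snd = ∑ i, ∑ j, if G.Adj i j then f i j else 0 := by
  rw [← sum_product' univ univ (fun i j => if G.Adj i j then f i j else 0), ← sum_filter]
  exact sum_bij' (fun d _ => d.toProd) (fun p hp => ⟨p, (mem_filter.1 hp).2⟩) (by simp) (by simp)
    (by simp) (by simp) (by simp)

variable [DecidableEq V]

lemma sum_dart_edge {M : Type*} [NonAssocSemiring M] (g : Sym2 V → M) :
    ∑ d : G.Dart, g d.edge = 2 * ∑ e ∈ G.edgeFinset, g e := by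
  rw [← sum_fiberwise_of_maps_to (t := G.edgeFinset) (g := Dart.edge)
    (fun d _ => G.mem_edgeFinset.2 d.edge_mem), mul_sum]
  refine sum_congr rfl fun e he => ?_
  rw [sum_congr rfl fun d hd => congrArg g (mem_filter.1 hd).2, sum_const,
    G.dart_edge_fiber_card e (G.mem_edgeFinset.1 he), nsmul_eq_mul, Nat.cast_ofNat]

lemma sum_edgeFinset_edgeSumSq (x : V → ℝ) :
    ∑ e ∈ G.edgeFinset, edgeSumSq x e = x ⬝ᵥ (G.degMatrix ℝ *ᵥ x) + x ⬝ᵥ (G.adjMatrix ℝ *ᵥ x) := by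
  have h2 := G.sum_dart_edge (edgeSumSq x)
  simp only [Dart.edge, edgeSumSq_mk] at h2
  rw [G.sum_dart_eq_sum_sum_adj (fun a b => (x a + x b) ^ 2)] at h2
  have hsymm : ∑ i, ∑ j, (if G.Adj i j then x j * x j else 0) =
      ∑ i, ∑ j, (if G.Adj i j then x i * x i else 0) := by
    rw [sum_comm]; simp_rw [G.adj_comm]
  have hsplit : ∀ i j, (if G.Adj i j then (x i + x j) ^ 2 else 0) =
      (if G.Adj i j then x i * x i else 0) + (if G.Adj i j then x j * x j else 0) +
        2 * (if G.Adj i j then x i * x j else 0) := by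
    intro i j; split_ifs <;> ring
  simp_rw [hsplit, sum_add_distrib, ← mul_sum, hsymm] at h2
  rw [dotProduct_mulVec_degMatrix, dotProduct_mulVec_adjMatrix]
  simp_rw [G.degree_eq_sum_if_adj (R := ℝ), sum_mul, ite_mul, one_mul, zero_mul]
  linarith

lemma minDegree_le_dotProduct_degMatrix_mulVec {x : V → ℝ} (hx : x ⬝ᵥ x = 1) :
    (G.minDegree : ℝ) ≤ x ⬝ᵥ (G.degMatrix ℝ *ᵥ x) := by
  rw [dotProduct_mulVec_degMatrix, ← mul_one (G.minDegree : ℝ), ← hx, dotProduct, mul_sum]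
  refine sum_le_sum fun i _ => ?_
  rw [mul_assoc]
  exact mul_le_mul_of_nonneg_right (mod_cast G.minDegree_le_degree i) (mul_self_nonneg _)

lemma dotProduct_degMatrix_mulVec_le_maxDegree {x : V → ℝ} (hx : x ⬝ᵥ x = 1) :
    x ⬝ᵥ (G.degMatrix ℝ *ᵥ x) ≤ G.maxDegree := by
  rw [dotProduct_mulVec_degMatrix, ← mul_one (G.maxDegree : ℝ), ← hx, dotProduct, mul_sum]
  refine sum_le_sum fun i _ => ?_
  rw [mul_assoc]
  exact mul_le_mul_of_nonneg_right (mod_cast G.degree_le_maxDegree i) (mul_self_nonneg _)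

variable {G}

theorem one_div_le_sum_edgeFinset_edgeSumSq (hconn : G.Connected) (hnb : ¬ G.Colorable 2)
    {x : V → ℝ} (hx : x ⬝ᵥ x = 1) :
    1 / (Fintype.card V * (G.diam + 1)) ≤ ∑ e ∈ G.edgeFinset, edgeSumSq x e := by
  obtain ⟨p, hp⟩ := exists_one_le_card_mul_sq hx
  have : Nonempty V := ⟨p⟩
  obtain ⟨a, b, hab, hxab, hle⟩ : ∃ a b, G.Adj a b ∧ 0 ≤ x a * x b ∧ |x a| ≤ |x b| := by
    obtain ⟨a, b, hab, hxab⟩ := exists_adj_mul_nonneg_of_not_colorable_two hnb x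
    rcases le_total |x a| |x b| with h | h
    · exact ⟨a, b, hab, hxab, h⟩
    · exact ⟨b, a, hab.symm, mul_comm (x a) (x b) ▸ hxab, h⟩
  obtain ⟨q, hq, hqlen⟩ := (hconn p a).exists_path_of_dist
  have hqD : (q.length : ℝ) ≤ G.diam :=
    mod_cast hqlen ▸ G.dist_le_diam (G.connected_iff_ediam_ne_top.1 hconn)
  have hpath : (q.edges.map (edgeDiffSq (|x ·|))).sum + x a ^ 2 ≤
      ∑ e ∈ G.edgeFinset, edgeSumSq x e := by
    rw [← List.sum_toFinset _ hq.edges_nodup]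
    exact sum_add_le_sum_of_subset
      (fun e he => G.mem_edgeFinset.2 (q.edges_subset_edgeSet (List.mem_toFinset.1 he)))
      (G.mem_edgeFinset.2 hab) (fun e _ => edgeDiffSq_nonneg _ e)
      (fun e _ => edgeDiffSq_abs_le_edgeSumSq x e) (edgeDiffSq_abs_add_sq_le_edgeSumSq x hxab hle)
  have hwalk := q.sq_le_length_succ_mul (|x ·|)
  simp only [sq_abs] at hwalk
  rw [div_le_iff₀ (by positivity)]
  calc 1 ≤ Fintype.card V * x p ^ 2 := hp
    _ ≤ Fintype.card V * ((G.diam + 1) * ∑ e ∈ G.edgeFinset, edgeSumSq x e) := by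
      gcongr
      refine hwalk.trans (mul_le_mul (by linarith) hpath ?_ (by positivity))
      exact add_nonneg (List.sum_nonneg (by simp [edgeDiffSq_nonneg])) (sq_nonneg _)
    _ = _ := by ring

theorem neg_maxDegree_add_le_dotProduct (hconn : G.Connected) (hnb : ¬ G.Colorable 2)
    {α : ℝ} (hα0 : 0 ≤ α) (hα1 : α ≤ 1) {x : V → ℝ} (hx : x ⬝ᵥ x = 1) :
    -(G.maxDegree : ℝ) + (1 + α) / (Fintype.card V * (G.diam + 1)) ≤
      α * (x ⬝ᵥ (G.degMatrix ℝ *ᵥ x)) + (1 - α) * (x ⬝ᵥ (G.adjMatrix ℝ *ᵥ x)) := by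
  have := nontrivial_of_not_colorable_two hnb
  set t : ℝ := 1 / (Fintype.card V * (G.diam + 1))
  have hW := one_div_le_sum_edgeFinset_edgeSumSq hconn hnb hx
  rw [G.sum_edgeFinset_edgeSumSq] at hW
  have hmin : (1 : ℝ) ≤ x ⬝ᵥ (G.degMatrix ℝ *ᵥ x) :=
    le_trans (mod_cast hconn.preconnected.minDegree_pos_of_nontrivial)
      (G.minDegree_le_dotProduct_degMatrix_mulVec hx)
  have hmax := G.dotProduct_degMatrix_mulVec_le_maxDegree hx
  have ht : t ≤ 1 := by
    refine div_le_one_of_le₀ ?_ (by positivity)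
    have : (1 : ℝ) ≤ Fintype.card V := mod_cast Fintype.card_pos
    nlinarith [(G.diam.cast_nonneg : (0 : ℝ) ≤ G.diam)]
  rw [div_eq_mul_one_div (1 + α)]
  nlinarith [mul_nonneg (sub_nonneg.2 hα1) (sub_nonneg.2 hW),
    mul_nonneg (sub_nonneg.2 hα1) (sub_nonneg.2 hmax), mul_nonneg hα0 (sub_nonneg.2 ht),
    mul_nonneg hα0 (sub_nonneg.2 hmin)]

end SimpleGraph

theorem stmt6 {n : ℕ} (G : SimpleGraph (Fin n)) [DecidableRel G.Adj]
    (hconn : G.Connected) (hnb : ¬ G.Colorable 2)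
    (α : ℝ) (hα0 : 0 ≤ α) (hα1 : α ≤ 1)
    (Δ : ℕ) (hΔ : Δ = G.maxDegree)
    (hH : (Aalpha G α).IsHermitian) :
    (⨅ i, hH.eigenvalues i) ≥ -(Δ : ℝ) + (1 + α) / ((n : ℝ) * ((G.diam : ℝ) + 1)) := by
  have := nontrivial_of_not_colorable_two hnb
  refine le_ciInf fun i => hH.le_eigenvalues (fun x hx => ?_) i
  have hquad : x ⬝ᵥ (Aalpha G α *ᵥ x) =
      α * (x ⬝ᵥ (G.degMatrix ℝ *ᵥ x)) + (1 - α) * (x ⬝ᵥ (G.adjMatrix ℝ *ᵥ x)) := by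
    simp only [Aalpha, add_mulVec, smul_mulVec, dotProduct_add, dotProduct_smul, smul_eq_mul]
    rfl
  rw [hquad, hΔ]
  simpa using neg_maxDegree_add_le_dotProduct hconn hnb hα0 hα1 hx
end

section
/- Let G be a non-bipartite Δ-regular graph on n vertices with diameter D and α ∈ [0,1]. Then λ₁(A_α(G)) + λₙ(A_α(G)) ≥ (1+α)/(n(D+1)). -/
/-!
Regularity makes `Δ` an eigenvalue (all-ones eigenvector), and for a unit vector `x`,
`Δ + xᵀ A_α x = 2αΔ + (1 - α) xᵀ Q x` where `Q = D + A` is the signless Laplacian,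
`xᵀ Q x = ∑_{ij ∈ E} (x_i + x_j)²`. As `G` is not bipartite, some edge `vw` has `x_v x_w ≥ 0`.
Appending it to a shortest path from a vertex `u` with `x_u² ≥ 1/n` to the nearer of `v`, `w`
gives a path of length at most `D + 1` along which `|x_u| ≤ ∑ |x_i + x_j|`, so by Cauchy–Schwarz
`xᵀ Q x ≥ 1/(n(D+1))`. Together with `Δ ≥ 1 ≥ 1/(n(D+1))` this bounds `λ₁ + λₙ`.
-/

open Matrix SimpleGraph Finset

namespace SimpleGraph
variable {V : Type*} {G : SimpleGraph V}

theorem sum_darts_eq_sum_sum_neighborFinset [Fintype V] [DecidableEq V] [DecidableRel G.Adj]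
    {M : Type*} [AddCommMonoid M] (f : V → V → M) :
    ∑ d : G.Dart, f d.fst d.snd = ∑ v, ∑ w ∈ G.neighborFinset v, f v w := by
  rw [← Finset.sum_fiberwise univ (fun d : G.Dart => d.fst)]
  refine Finset.sum_congr rfl fun v _ => ?_
  rw [dart_fst_fiber, Finset.sum_image fun _ _ _ _ h => G.dartOfNeighborSet_injective v h]
  exact (Finset.sum_subtype _ (fun w => mem_neighborFinset G v w) (f v)).symm

theorem sum_dart_symm [Fintype V] [DecidableRel G.Adj] {M : Type*} [AddCommMonoid M]
    (f : G.Dart → M) : ∑ d : G.Dart, f d.symm = ∑ d : G.Dart, f d :=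
  Equiv.sum_comp (Dart.symm_involutive.toPerm _) f

theorem dotProduct_mulVec_degMatrix_add_adjMatrix [Fintype V] [DecidableEq V]
    [DecidableRel G.Adj] (x : V → ℝ) :
    x ⬝ᵥ (G.degMatrix ℝ + G.adjMatrix ℝ) *ᵥ x = (∑ d : G.Dart, (x d.fst + x d.snd) ^ 2) / 2 := by
  have hfst : ∑ d : G.Dart, x d.fst * (x d.fst + x d.snd) =
      x ⬝ᵥ (G.degMatrix ℝ + G.adjMatrix ℝ) *ᵥ x := by
    rw [sum_darts_eq_sum_sum_neighborFinset fun v w => x v * (x v + x w)]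
    simp [dotProduct, add_mulVec, degMatrix_mulVec_apply, mul_add, sum_add_distrib, mul_sum,
      mul_left_comm]
  have hsnd : ∑ d : G.Dart, x d.snd * (x d.fst + x d.snd) =
      ∑ d : G.Dart, x d.fst * (x d.fst + x d.snd) := by
    rw [← sum_dart_symm]
    simp [add_comm]
  rw [← hfst]
  simp only [sq, add_mul, sum_add_distrib] at hsnd ⊢
  linarith

theorem exists_adj_zero_le_mul_of_not_colorable_two (hnb : ¬ G.Colorable 2) (x : V → ℝ) :
    ∃ v w, G.Adj v w ∧ 0 ≤ x v * x w := by
  by_contra! h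
  refine hnb ⟨Coloring.mk (fun v => if 0 ≤ x v then 0 else 1) fun {v w} hvw hc => ?_⟩
  have := h v w hvw
  split_ifs at hc with hv hw hw <;> first | exact absurd hc (by decide) | nlinarith

theorem IsRegularOfDegree.one_le_of_not_colorable_two [Fintype V] [DecidableRel G.Adj] {Δ : ℕ}
    (hreg : G.IsRegularOfDegree Δ) (hnb : ¬ G.Colorable 2) : 1 ≤ Δ := by
  obtain ⟨v, w, hvw⟩ : ∃ v w, G.Adj v w := by
    by_contra! h
    exact hnb ((colorable_one_iff.mpr (eq_bot_iff_forall_not_adj.mpr h)).mono one_le_two)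
  exact hreg v ▸ (G.degree_pos_iff_exists_adj v).mpr ⟨w, hvw⟩

namespace Walk

theorem abs_le_abs_add_sum_darts (x : V → ℝ) {a b : V} (p : G.Walk a b) :
    |x a| ≤ |x b| + (p.darts.map fun d => |x d.fst + x d.snd|).sum := by
  induction p with
  | nil => simp
  | @cons u v _ _ _ ih =>
    have : |x u| ≤ |x u + x v| + |x v| := by simpa using abs_add_le (x u + x v) (-x v)
    simp only [darts_cons, List.map_cons, List.sum_cons]
    linarith

theorem IsTrail.sq_sum_darts_le {a b : V} {p : G.Walk a b} (hp : p.IsTrail) (f : G.Dart → ℝ) :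
    (p.darts.map f).sum ^ 2 ≤ p.length * (p.darts.map fun d => f d ^ 2).sum := by
  classical
  have hnd : p.darts.Nodup := hp.edges_nodup.of_map _
  rw [← List.sum_toFinset _ hnd, ← List.sum_toFinset _ hnd, ← p.length_darts,
    ← List.toFinset_card_of_nodup hnd]
  exact sq_sum_le_card_mul_sum_sq

theorem IsTrail.two_mul_sum_darts_le [Fintype V] [DecidableRel G.Adj] {a b : V}
    {p : G.Walk a b} (hp : p.IsTrail) {f : G.Dart → ℝ} (hsymm : ∀ d, f d.symm = f d)
    (hf : ∀ d, 0 ≤ f d) : 2 * (p.darts.map f).sum ≤ ∑ d, f d := by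
  classical
  have hnd : p.darts.Nodup := hp.edges_nodup.of_map _
  set S := p.darts.toFinset
  -- distinct darts of a trail lie on distinct edges, so no dart of it is reversed in it
  have hdisj : Disjoint S (S.image Dart.symm) := by
    refine Finset.disjoint_left.mpr fun d hd hd' => ?_
    obtain ⟨e, he, rfl⟩ := Finset.mem_image.mp hd'
    rw [List.mem_toFinset] at hd he
    exact e.symm_ne (List.inj_on_of_nodup_map hp.edges_nodup hd he e.edge_symm)
  calc 2 * (p.darts.map f).sum = ∑ d ∈ S ∪ S.image Dart.symm, f d := by
        rw [sum_union hdisj, sum_image fun _ _ _ _ h => Dart.symm_involutive.injective h,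
          ← List.sum_toFinset _ hnd, two_mul]
        simp only [hsymm, S]
    _ ≤ ∑ d, f d := sum_le_univ_sum_of_nonneg hf

theorem notMem_support_of_length_eq_dist {u v w : V} {p : G.Walk u v}
    (hp : p.length = G.dist u v) (hvw : G.Adj v w) (hdist : G.dist u v ≤ G.dist u w) :
    w ∉ p.support := fun hw => by
  classical
  have := p.length_takeUntil_lt_length hw hvw.ne'
  have := G.dist_le (p.takeUntil w hw)
  omega

end Walk

theorem Connected.exists_isPath_abs_le_sum_darts [Fintype V] (hconn : G.Connected)
    (x : V → ℝ) (u : V) {v w : V} (hvw : G.Adj v w) (hsign : 0 ≤ x v * x w) :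
    ∃ (b : V) (q : G.Walk u b), q.IsPath ∧ q.length ≤ G.diam + 1 ∧
      |x u| ≤ (q.darts.map fun d => |x d.fst + x d.snd|).sum := by
  wlog hdist : G.dist u v ≤ G.dist u w generalizing v w
  · exact this hvw.symm (mul_comm (x v) (x w) ▸ hsign) (le_of_not_ge hdist)
  have := hconn.nonempty
  obtain ⟨p, hp, hlen⟩ := hconn.exists_path_of_dist u v
  refine ⟨w, p.concat hvw, hp.concat (p.notMem_support_of_length_eq_dist hlen hvw hdist) hvw,
    ?_, ?_⟩
  · have := G.dist_le_diam (connected_iff_ediam_ne_top.mp hconn) (u := u) (v := v)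
    rw [Walk.length_concat]
    omega
  · have htel := p.abs_le_abs_add_sum_darts x
    have hvw_sign : |x v| ≤ |x v + x w| := sq_le_sq.mp (by nlinarith)
    rw [Walk.darts_concat, List.concat_eq_append, List.map_append, List.sum_append]
    simp only [List.map_cons, List.map_nil, List.sum_cons, List.sum_nil, add_zero]
    linarith

theorem Connected.two_le_card_mul_diam_mul_sum_darts [Fintype V] [DecidableRel G.Adj]
    (hconn : G.Connected) (hnb : ¬ G.Colorable 2) {x : V → ℝ} (hx : ∑ v, x v ^ 2 = 1) :
    2 ≤ Fintype.card V * (G.diam + 1) * ∑ d : G.Dart, (x d.fst + x d.snd) ^ 2 := by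
  have := hconn.nonempty
  obtain ⟨u, -, hu⟩ := exists_max_image univ (fun v => x v ^ 2) univ_nonempty
  have hxu : 1 ≤ Fintype.card V * x u ^ 2 := calc
    1 = ∑ v, x v ^ 2 := hx.symm
    _ ≤ ∑ _v : V, x u ^ 2 := sum_le_sum hu
    _ = Fintype.card V * x u ^ 2 := by simp
  obtain ⟨v, w, hvw, hsign⟩ := exists_adj_zero_le_mul_of_not_colorable_two hnb x
  obtain ⟨b, q, hq, hlen, hxq⟩ := hconn.exists_isPath_abs_le_sum_darts x u hvw hsign
  set R := (q.darts.map fun d => (x d.fst + x d.snd) ^ 2).sum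
  have hR : 0 ≤ R := List.sum_nonneg (by simp [sq_nonneg])
  have hcs : x u ^ 2 ≤ q.length * R := by
    have := hq.isTrail.sq_sum_darts_le fun d => |x d.fst + x d.snd|
    simp only [sq_abs] at this
    exact (sq_le_sq.mpr (hxq.trans (le_abs_self _))).trans this
  have hdbl : 2 * R ≤ ∑ d : G.Dart, (x d.fst + x d.snd) ^ 2 :=
    hq.isTrail.two_mul_sum_darts_le (fun d => by simp [add_comm]) (fun d => sq_nonneg _)
  have hlen' : (q.length : ℝ) ≤ G.diam + 1 := by exact_mod_cast hlen
  calc (2 : ℝ) ≤ 2 * (Fintype.card V * (q.length * R)) := by nlinarith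
    _ ≤ Fintype.card V * (G.diam + 1) * (2 * R) := by
        have : (q.length : ℝ) * R ≤ (G.diam + 1) * R := mul_le_mul_of_nonneg_right hlen' hR
        nlinarith
    _ ≤ _ := by gcongr

end SimpleGraph

theorem Matrix.IsHermitian.le_iSup_eigenvalues_of_mulVec_eq_smul {ι : Type*} [Fintype ι]
    [DecidableEq ι] {A : Matrix ι ι ℝ} (hA : A.IsHermitian) {v : ι → ℝ} (hv : v ≠ 0) {μ : ℝ}
    (h : A *ᵥ v = μ • v) : μ ≤ ⨆ i, hA.eigenvalues i := by
  have hμ : μ ∈ spectrum ℝ A := spectrum_toLin' A ▸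
    (Module.End.hasEigenvalue_of_hasEigenvector
      ⟨Module.End.mem_eigenspace_iff.mpr (by simpa using h), hv⟩).mem_spectrum
  obtain ⟨i, rfl⟩ := hA.spectrum_real_eq_range_eigenvalues ▸ hμ
  exact le_ciSup (Set.finite_range _).bddAbove i

theorem EuclideanSpace.sum_sq_eq_one_of_norm_eq_one {ι : Type*} [Fintype ι]
    {v : EuclideanSpace ℝ ι} (hv : ‖v‖ = 1) : ∑ i, v i ^ 2 = 1 := by
  simpa [hv] using (EuclideanSpace.real_norm_sq_eq v).symm

section Aalpha

variable {n : ℕ} {G : SimpleGraph (Fin n)} [DecidableRel G.Adj] {Δ : ℕ} {α : ℝ}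

theorem Aalpha_eq (G : SimpleGraph (Fin n)) [DecidableRel G.Adj] (α : ℝ) :
    Aalpha G α = α • G.degMatrix ℝ + (1 - α) • G.adjMatrix ℝ := rfl

theorem Aalpha_mulVec_one (hreg : G.IsRegularOfDegree Δ) :
    Aalpha G α *ᵥ (fun _ => 1) = (Δ : ℝ) • fun _ => 1 := by
  ext i
  simp only [Aalpha_eq, add_mulVec, smul_mulVec, Pi.add_apply, Pi.smul_apply, smul_eq_mul,
    degMatrix_mulVec_apply, adjMatrix_mulVec_apply, sum_const, card_neighborFinset_eq_degree,
    hreg i, nsmul_eq_mul]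
  ring

theorem dotProduct_Aalpha_mulVec (hreg : G.IsRegularOfDegree Δ) {x : Fin n → ℝ}
    (hx : ∑ i, x i ^ 2 = 1) :
    x ⬝ᵥ Aalpha G α *ᵥ x =
      2 * α * Δ + (1 - α) * ((∑ d : G.Dart, (x d.fst + x d.snd) ^ 2) / 2) - Δ := by
  have hdeg : x ⬝ᵥ G.degMatrix ℝ *ᵥ x = Δ := by
    simp [dotProduct_mulVec_degMatrix, hreg _, mul_assoc, ← mul_sum, ← sq, hx]
  rw [← dotProduct_mulVec_degMatrix_add_adjMatrix, Aalpha_eq, add_mulVec, add_mulVec,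
    smul_mulVec, smul_mulVec, dotProduct_add, dotProduct_add, dotProduct_smul, dotProduct_smul,
    hdeg, smul_eq_mul, smul_eq_mul]
  ring

theorem sub_le_dotProduct_Aalpha_mulVec (hconn : G.Connected) (hnb : ¬ G.Colorable 2)
    (hreg : G.IsRegularOfDegree Δ) (hα0 : 0 ≤ α) (hα1 : α ≤ 1) {x : Fin n → ℝ}
    (hx : ∑ i, x i ^ 2 = 1) :
    (1 + α) / (n * (G.diam + 1)) - Δ ≤ x ⬝ᵥ Aalpha G α *ᵥ x := by
  set c : ℝ := n * (G.diam + 1)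
  set Q := ∑ d : G.Dart, (x d.fst + x d.snd) ^ 2
  have hQ : 2 ≤ c * Q := by simpa using hconn.two_le_card_mul_diam_mul_sum_darts hnb hx
  have hc : 1 ≤ c := by
    have : (1 : ℝ) ≤ n := by exact_mod_cast Fin.pos_iff_nonempty.mpr hconn.nonempty
    nlinarith [(Nat.cast_nonneg G.diam : (0 : ℝ) ≤ G.diam)]
  have hΔ : 1 / c ≤ Δ := (div_le_one₀ (by linarith)).mpr hc |>.trans
    (by exact_mod_cast hreg.one_le_of_not_colorable_two hnb)
  have hQc : 1 / c ≤ Q / 2 := by rw [div_le_iff₀ (by linarith)]; linarith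
  rw [dotProduct_Aalpha_mulVec hreg hx]
  have h1 := mul_le_mul_of_nonneg_left hΔ (by linarith : 0 ≤ 2 * α)
  have h2 := mul_le_mul_of_nonneg_left hQc (by linarith : 0 ≤ 1 - α)
  have : (1 + α) / c = 2 * α * (1 / c) + (1 - α) * (1 / c) := by ring
  linarith

end Aalpha

theorem stmt7 {n : ℕ} (G : SimpleGraph (Fin n)) [DecidableRel G.Adj]
    (hconn : G.Connected) (hnb : ¬ G.Colorable 2)
    (Δ : ℕ) (hreg : G.IsRegularOfDegree Δ)
    (α : ℝ) (hα0 : 0 ≤ α) (hα1 : α ≤ 1)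
    (hH : (Aalpha G α).IsHermitian) :
    (⨆ i, hH.eigenvalues i) + (⨅ i, hH.eigenvalues i) ≥
      (1 + α) / ((n : ℝ) * ((G.diam : ℝ) + 1)) := by
  have := hconn.nonempty
  have hsup : (Δ : ℝ) ≤ ⨆ i, hH.eigenvalues i :=
    hH.le_iSup_eigenvalues_of_mulVec_eq_smul
      (Function.ne_iff.mpr ⟨Classical.arbitrary _, one_ne_zero⟩) (Aalpha_mulVec_one hreg)
  have hinf : (1 + α) / (n * (G.diam + 1)) - Δ ≤ ⨅ i, hH.eigenvalues i := le_ciInf fun i => by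
    rw [hH.eigenvalues_eq i]
    simpa using sub_le_dotProduct_Aalpha_mulVec hconn hnb hreg hα0 hα1
      (EuclideanSpace.sum_sq_eq_one_of_norm_eq_one (hH.eigenvectorBasis.orthonormal.1 i))
  linarith
end

section
/- Let G be a graph with n vertices, m edges, minimum degree δ, clique number ω, and α ∈ [0,1]. Then αδ - sqrt(2m(1-α)(1 - 1/ω)) ≤ λₙ(A_α(G)) ≤ αδ + sqrt(2m(1-α)(1 - 1/ω)). -/
/-!
Write `A_α = α D + (1 - α) A`. For every `x`, `xᵀ D x ≥ δ ‖x‖²` and `xᵀ A x ≥ -√m ‖x‖²`: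
splitting `x = x⁺ - x⁻` gives `xᵀ A x ≥ -2 (x⁺)ᵀ A x⁻`, and Cauchy–Schwarz over the at most `m`
ordered adjacent pairs `(i, j)` with `x i > 0 > x j` bounds `(x⁺)ᵀ A x⁻` by
`√m ‖x⁺‖ ‖x⁻‖ ≤ √m ‖x‖² / 2`. Hence `λₙ ≥ αδ - (1 - α)√m`, and since a graph with an edge has
`ω ≥ 2`, `(1 - α)√m ≤ √(2m(1 - α)(1 - 1/ω))`, so the Motzkin–Straus bound is not needed.
The upper bound is the Rayleigh quotient `αδ` of the indicator vector of a vertex of minimum degree.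
-/

open Matrix SimpleGraph Finset

namespace Matrix

variable {ι : Type*} [Fintype ι] [DecidableEq ι]

theorem IsHermitian.le_iInf_eigenvalues_iff [Nonempty ι] {A : Matrix ι ι ℝ}
    (hA : A.IsHermitian) (c : ℝ) :
    c ≤ ⨅ i, hA.eigenvalues i ↔ ∀ x : ι → ℝ, c * (x ⬝ᵥ x) ≤ x ⬝ᵥ (A *ᵥ x) := by
  have hshift : (A - algebraMap ℝ _ c).IsHermitian :=
    hA.sub (IsSelfAdjoint.algebraMap _ (IsSelfAdjoint.all c))
  calc c ≤ ⨅ i, hA.eigenvalues i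
      ↔ spectrum ℝ (A - algebraMap ℝ _ c) ⊆ {μ | 0 ≤ μ} := by
        rw [le_ciInf_iff (Finite.bddBelow_range _), ← spectrum.sub_singleton_eq,
          hA.spectrum_real_eq_range_eigenvalues]
        simp [Set.sub_singleton, Set.subset_def]
    _ ↔ (A - algebraMap ℝ _ c).PosSemidef := by
        rw [posSemidef_iff_isHermitian_and_spectrum_nonneg, and_iff_right hshift]
    _ ↔ ∀ x : ι → ℝ, c * (x ⬝ᵥ x) ≤ x ⬝ᵥ (A *ᵥ x) := by
        rw [posSemidef_iff_dotProduct_mulVec, and_iff_right hshift]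
        refine forall_congr' fun x => ?_
        rw [star_trivial, algebraMap_eq_diagonal, sub_mulVec, dotProduct_sub, sub_nonneg]
        simp [Pi.algebraMap_def, mulVec_diagonal, dotProduct, Finset.mul_sum, mul_left_comm]

end Matrix

namespace SimpleGraph

theorem two_le_cliqueNum_of_adj {V : Type*} [Finite V] {G : SimpleGraph V} {u v : V}
    (h : G.Adj u v) : 2 ≤ G.cliqueNum := by
  classical
  rw [← card_pair h.ne]
  exact IsClique.card_le_cliqueNum (tc := by simpa [isClique_pair] using fun _ => h)

variable {V : Type*} [Fintype V] (G : SimpleGraph V) [DecidableRel G.Adj]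

theorem dotProduct_adjMatrix_mulVec_nonneg {x y : V → ℝ} (hx : 0 ≤ x) (hy : 0 ≤ y) :
    0 ≤ x ⬝ᵥ (G.adjMatrix ℝ *ᵥ y) := by
  rw [dotProduct_mulVec_adjMatrix]
  refine sum_nonneg fun i _ => sum_nonneg fun j _ => ?_
  split_ifs
  exacts [mul_nonneg (hx i) (hy j), le_rfl]

theorem sq_dotProduct_adjMatrix_mulVec_le {x y : V → ℝ} (hxy : ∀ i, x i * y i = 0) :
    (x ⬝ᵥ (G.adjMatrix ℝ *ᵥ y)) ^ 2 ≤ #G.edgeFinset * ((x ⬝ᵥ x) * (y ⬝ᵥ y)) := by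
  set S := ({p | G.Adj p.1 p.2 ∧ x p.1 ≠ 0 ∧ y p.2 ≠ 0} : Finset (V × V))
  have hsum : x ⬝ᵥ (G.adjMatrix ℝ *ᵥ y) = ∑ p ∈ S, x p.1 * y p.2 := by
    rw [dotProduct_mulVec_adjMatrix, sum_filter, ← univ_product_univ, sum_product]
    refine sum_congr rfl fun i _ => sum_congr rfl fun j _ => ?_
    by_cases hi : x i = 0 <;> by_cases hj : y j = 0 <;> simp [hi, hj]
  -- `(i, j)` and `(j, i)` are not both in `S`, since `x` and `y` have disjoint supports.
  have hcard : #S ≤ #G.edgeFinset := by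
    refine card_le_card_of_injOn (fun p => s(p.1, p.2)) (fun p hp => ?_) ?_
    · simp only [S, coe_filter, Set.mem_ofPred_eq, mem_univ, true_and] at hp
      simpa using hp.1
    · rintro ⟨i, j⟩ hp ⟨i', j'⟩ hp' h
      simp only [S, coe_filter, Set.mem_ofPred_eq, mem_univ, true_and] at hp hp'
      rcases Sym2.eq_iff.mp h with ⟨rfl, rfl⟩ | ⟨rfl, rfl⟩
      · rfl
      · exact absurd (hxy i) (mul_ne_zero hp.2.1 hp'.2.2)
  have hsq : ∑ p ∈ S, (x p.1 * y p.2) ^ 2 ≤ (x ⬝ᵥ x) * (y ⬝ᵥ y) := by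
    calc ∑ p ∈ S, (x p.1 * y p.2) ^ 2 ≤ ∑ p : V × V, (x p.1 * y p.2) ^ 2 :=
          sum_le_sum_of_subset_of_nonneg (subset_univ S) fun _ _ _ => sq_nonneg _
      _ = (x ⬝ᵥ x) * (y ⬝ᵥ y) := by
          simp only [dotProduct, sum_mul_sum, ← univ_product_univ, sum_product]
          exact sum_congr rfl fun i _ => sum_congr rfl fun j _ => by ring
  calc (x ⬝ᵥ (G.adjMatrix ℝ *ᵥ y)) ^ 2 ≤ #S * ∑ p ∈ S, (x p.1 * y p.2) ^ 2 :=
        hsum ▸ sq_sum_le_card_mul_sum_sq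
    _ ≤ #G.edgeFinset * ((x ⬝ᵥ x) * (y ⬝ᵥ y)) :=
        mul_le_mul (by exact_mod_cast hcard) hsq (sum_nonneg fun _ _ => sq_nonneg _)
          (Nat.cast_nonneg _)

theorem neg_sqrt_mul_dotProduct_self_le_dotProduct_adjMatrix_mulVec (x : V → ℝ) :
    -√(#G.edgeFinset) * (x ⬝ᵥ x) ≤ x ⬝ᵥ (G.adjMatrix ℝ *ᵥ x) := by
  set A := G.adjMatrix ℝ
  have hdisj : ∀ i, x⁺ i * x⁻ i = 0 := fun i => by
    rw [Pi.posPart_apply, Pi.negPart_apply]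
    rcases le_total (x i) 0 with h | h
    · rw [posPart_eq_zero.mpr h, zero_mul]
    · rw [negPart_eq_zero.mpr h, mul_zero]
  have hsymm : x⁻ ⬝ᵥ (A *ᵥ x⁺) = x⁺ ⬝ᵥ (A *ᵥ x⁻) := by
    rw [dotProduct_mulVec, ← mulVec_transpose, G.isSymm_adjMatrix.eq, dotProduct_comm]
  have hself : x ⬝ᵥ x = x⁺ ⬝ᵥ x⁺ + x⁻ ⬝ᵥ x⁻ := by
    have : x⁺ ⬝ᵥ x⁻ = 0 := sum_eq_zero fun i _ => hdisj i
    conv_lhs => rw [← posPart_sub_negPart x]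
    simp only [sub_dotProduct, dotProduct_sub, dotProduct_comm x⁻ x⁺, this]
    ring
  have hquad : x ⬝ᵥ (A *ᵥ x) =
      x⁺ ⬝ᵥ (A *ᵥ x⁺) + x⁻ ⬝ᵥ (A *ᵥ x⁻) - 2 * (x⁺ ⬝ᵥ (A *ᵥ x⁻)) := by
    conv_lhs => rw [← posPart_sub_negPart x]
    simp only [mulVec_sub, sub_dotProduct, dotProduct_sub, hsymm]
    ring
  have hpos := G.dotProduct_adjMatrix_mulVec_nonneg (posPart_nonneg x) (posPart_nonneg x)
  have hneg := G.dotProduct_adjMatrix_mulVec_nonneg (negPart_nonneg x) (negPart_nonneg x)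
  have hcs := G.sq_dotProduct_adjMatrix_mulVec_le hdisj
  have hm : (0 : ℝ) ≤ #G.edgeFinset := Nat.cast_nonneg _
  have ha : 0 ≤ x⁺ ⬝ᵥ x⁺ := Fintype.sum_nonneg fun i => mul_self_nonneg _
  have hb : 0 ≤ x⁻ ⬝ᵥ x⁻ := Fintype.sum_nonneg fun i => mul_self_nonneg _
  have hcross : 2 * (x⁺ ⬝ᵥ (A *ᵥ x⁻)) ≤ √(#G.edgeFinset) * (x ⬝ᵥ x) := by
    refine (abs_le_of_sq_le_sq' ?_ (mul_nonneg (Real.sqrt_nonneg _) (hself ▸ add_nonneg ha hb))).2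
    rw [mul_pow, mul_pow, Real.sq_sqrt hm, hself]
    nlinarith [sq_nonneg (x⁺ ⬝ᵥ x⁺ - x⁻ ⬝ᵥ x⁻), mul_nonneg hm (sq_nonneg (x⁺ ⬝ᵥ x⁺ - x⁻ ⬝ᵥ x⁻))]
  linarith

theorem mul_sqrt_card_edgeFinset_le {t : ℝ} (ht0 : 0 ≤ t) (ht1 : t ≤ 1) :
    t * √(#G.edgeFinset) ≤ √(2 * #G.edgeFinset * t * (1 - 1 / G.cliqueNum)) := by
  have key : t ^ 2 * #G.edgeFinset ≤ 2 * #G.edgeFinset * t * (1 - 1 / G.cliqueNum) := by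
    obtain hm | ⟨⟨u, v⟩, he⟩ := G.edgeFinset.eq_empty_or_nonempty
    · simp [hm]
    have hω : (2 : ℝ) ≤ G.cliqueNum := by
      exact_mod_cast two_le_cliqueNum_of_adj (G.mem_edgeFinset.1 he)
    have hω' : 1 ≤ 2 * (1 - 1 / (G.cliqueNum : ℝ)) := by
      rw [mul_sub, mul_one_div, le_sub_comm, div_le_iff₀ (by positivity)]; linarith
    have hm : (0 : ℝ) ≤ #G.edgeFinset := Nat.cast_nonneg _
    nlinarith [mul_nonneg (mul_nonneg ht0 (sub_nonneg.2 ht1)) hm,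
      mul_nonneg (mul_nonneg ht0 hm) (sub_nonneg.2 hω')]
  calc t * √(#G.edgeFinset) = √(t ^ 2 * #G.edgeFinset) := by
        rw [Real.sqrt_mul (sq_nonneg t), Real.sqrt_sq ht0]
    _ ≤ _ := Real.sqrt_le_sqrt key

end SimpleGraph

section Aalpha

variable {n : ℕ} (G : SimpleGraph (Fin n)) [DecidableRel G.Adj] {α : ℝ}

theorem Aalpha_apply_self (v : Fin n) : Aalpha G α v v = α * G.degree v := by
  simp [Aalpha]

theorem mul_dotProduct_self_le_dotProduct_Aalpha_mulVec (hα0 : 0 ≤ α) (hα1 : α ≤ 1) {δ : ℕ}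
    (hδ : ∀ v, δ ≤ G.degree v) (x : Fin n → ℝ) :
    (α * δ - (1 - α) * √(#G.edgeFinset)) * (x ⬝ᵥ x) ≤ x ⬝ᵥ (Aalpha G α *ᵥ x) := by
  have hdeg : δ * (x ⬝ᵥ x) ≤ x ⬝ᵥ (diagonal (fun i => (G.degree i : ℝ)) *ᵥ x) := by
    simp only [mulVec_diagonal, dotProduct, mul_sum]
    exact sum_le_sum fun i _ => by
      nlinarith [mul_self_nonneg (x i), (by exact_mod_cast hδ i : (δ : ℝ) ≤ G.degree i)]
  have hadj := G.neg_sqrt_mul_dotProduct_self_le_dotProduct_adjMatrix_mulVec x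
  rw [Aalpha, add_mulVec, smul_mulVec, smul_mulVec, dotProduct_add, dotProduct_smul,
    dotProduct_smul, smul_eq_mul, smul_eq_mul]
  nlinarith [mul_le_mul_of_nonneg_left hdeg hα0, mul_le_mul_of_nonneg_left hadj (sub_nonneg.2 hα1)]

end Aalpha

theorem stmt8_general {n : ℕ} (G : SimpleGraph (Fin n)) [DecidableRel G.Adj]
    (α : ℝ) (hα0 : 0 ≤ α) (hα1 : α ≤ 1)
    (m δ ω : ℕ) (hm : m = G.edgeFinset.card)
    (hδ : ∀ v, δ ≤ G.degree v) (hδ' : ∃ v, G.degree v = δ)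
    (hω : ω = G.cliqueNum)
    (hH : (Aalpha G α).IsHermitian) :
    α * (δ : ℝ) - Real.sqrt (2 * m * (1 - α) * (1 - 1 / (ω : ℝ))) ≤ (⨅ i, hH.eigenvalues i) ∧
      (⨅ i, hH.eigenvalues i) ≤ α * (δ : ℝ) + Real.sqrt (2 * m * (1 - α) * (1 - 1 / (ω : ℝ))) := by
  obtain ⟨v, hv⟩ := hδ'
  have : Nonempty (Fin n) := ⟨v⟩
  subst hm hω
  constructor
  · refine (hH.le_iInf_eigenvalues_iff _).2 fun x => le_trans ?_
      (mul_dotProduct_self_le_dotProduct_Aalpha_mulVec G hα0 hα1 hδ x)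
    refine mul_le_mul_of_nonneg_right ?_ (Fintype.sum_nonneg fun i => mul_self_nonneg _)
    linarith [G.mul_sqrt_card_edgeFinset_le (sub_nonneg.2 hα1) (by linarith : 1 - α ≤ 1)]
  · have hv' := (hH.le_iInf_eigenvalues_iff _).1 le_rfl (Pi.single v 1)
    simp only [mulVec_single_one, single_dotProduct, one_mul, col_apply, Aalpha_apply_self, hv,
      Pi.single_eq_same, mul_one] at hv'
    linarith [Real.sqrt_nonneg (2 * #G.edgeFinset * (1 - α) * (1 - 1 / (G.cliqueNum : ℝ)))]

theorem stmt8 {n : ℕ} (hn : 0 < n) (G : SimpleGraph (Fin n)) [DecidableRel G.Adj]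
    (α : ℝ) (hα0 : 0 ≤ α) (hα1 : α ≤ 1)
    (m δ ω : ℕ) (hm : m = G.edgeFinset.card)
    (hδ : ∀ v, δ ≤ G.degree v) (hδ' : ∃ v, G.degree v = δ)
    (hω : ω = G.cliqueNum)
    (hH : (Aalpha G α).IsHermitian) :
    α * (δ : ℝ) - Real.sqrt (2 * m * (1 - α) * (1 - 1 / (ω : ℝ))) ≤ (⨅ i, hH.eigenvalues i) ∧
      (⨅ i, hH.eigenvalues i) ≤ α * (δ : ℝ) + Real.sqrt (2 * m * (1 - α) * (1 - 1 / (ω : ℝ))) :=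
  stmt8_general G α hα0 hα1 m δ ω hm hδ hδ' hω hH
end

section
/- Let G be a simple graph with n ≥ 3 vertices, m edges, minimum degree δ and maximum degree Δ. Then the first Zagreb index satisfies Z₁(G) ≥ Δ² + δ² + (2m - Δ - δ)²/(n-2), with equality if and only if d₂ = d₃ = ... = d_{n-1} in the nonincreasing degree sequence. -/
open Matrix SimpleGraph Finset

/-!
Set aside a vertex of degree Δ and a different vertex of degree δ. The remaining `n - 2`
degrees sum to `2m - Δ - δ`, and for any `k` reals with sum `T` one has
`∑ (xᵢ - T/k)² = ∑ xᵢ² - T²/k`, so `∑ xᵢ² ≥ T²/k` with equality exactly when all `xᵢ` are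
equal. If Δ = δ the graph is regular and any two distinct vertices can be set aside.
-/

namespace Finset

variable {ι : Type*} (s : Finset ι) (f : ι → ℝ)

theorem sum_sq_sub_average_eq :
    ∑ i ∈ s, (f i - (∑ j ∈ s, f j) / #s) ^ 2 = ∑ i ∈ s, f i ^ 2 - (∑ i ∈ s, f i) ^ 2 / #s := by
  rcases s.eq_empty_or_nonempty with rfl | hs
  · simp
  have hcard : (#s : ℝ) ≠ 0 := by exact_mod_cast hs.card_pos.ne'
  simp only [sub_sq, sum_add_distrib, sum_sub_distrib, ← sum_mul, ← mul_sum, sum_const,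
    nsmul_eq_mul]
  field_simp
  ring

theorem sq_sum_div_card_le_sum_sq : (∑ i ∈ s, f i) ^ 2 / #s ≤ ∑ i ∈ s, f i ^ 2 := by
  rw [← sub_nonneg, ← sum_sq_sub_average_eq]
  exact sum_nonneg fun i _ => sq_nonneg _

theorem sq_sum_div_card_eq_sum_sq_iff :
    (∑ i ∈ s, f i) ^ 2 / #s = ∑ i ∈ s, f i ^ 2 ↔ ∀ a ∈ s, ∀ b ∈ s, f a = f b := by
  have hdev : (∑ i ∈ s, f i) ^ 2 / #s = ∑ i ∈ s, f i ^ 2 ↔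
      ∀ i ∈ s, f i = (∑ j ∈ s, f j) / #s := by
    rw [eq_comm, ← sub_eq_zero, ← sum_sq_sub_average_eq,
      sum_eq_zero_iff_of_nonneg fun i _ => sq_nonneg _]
    simp only [sq_eq_zero_iff, sub_eq_zero]
  rw [hdev]
  refine ⟨fun h a ha b hb => (h a ha).trans (h b hb).symm, fun h i hi => ?_⟩
  have hcard : (#s : ℝ) ≠ 0 := by exact_mod_cast (card_pos.mpr ⟨i, hi⟩).ne'
  rw [sum_congr rfl fun j hj => h j hj i hi, sum_const, nsmul_eq_mul]
  field_simp

end Finset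

section TwoPoints

variable {V : Type*} [Fintype V] [DecidableEq V] {u w : V}

theorem Fintype.sum_compl_pair (g : V → ℝ) (huw : u ≠ w) :
    ∑ v ∈ {u, w}ᶜ, g v = ∑ v, g v - g u - g w := by
  rw [← sum_add_sum_compl {u, w}, sum_pair huw]
  ring

theorem Fintype.card_compl_pair (huw : u ≠ w) :
    (#({u, w}ᶜ : Finset V) : ℝ) = Fintype.card V - 2 := by
  have h2 : 2 ≤ Fintype.card V := by
    simpa [card_pair huw] using card_le_univ ({u, w} : Finset V)
  rw [card_compl, card_pair huw, Nat.cast_sub h2, Nat.cast_ofNat]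

variable (f : V → ℝ)

theorem sq_add_sq_add_sq_sub_div_le_sum_sq (huw : u ≠ w) :
    f u ^ 2 + f w ^ 2 + (∑ v, f v - f u - f w) ^ 2 / (Fintype.card V - 2) ≤ ∑ v, f v ^ 2 := by
  rw [← Fintype.sum_compl_pair f huw, ← Fintype.card_compl_pair huw]
  linarith [sq_sum_div_card_le_sum_sq {u, w}ᶜ f, Fintype.sum_compl_pair (f · ^ 2) huw]

theorem sq_add_sq_add_sq_sub_div_eq_sum_sq_iff (huw : u ≠ w) :
    f u ^ 2 + f w ^ 2 + (∑ v, f v - f u - f w) ^ 2 / (Fintype.card V - 2) = ∑ v, f v ^ 2 ↔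
      ∀ a b, a ≠ u → a ≠ w → b ≠ u → b ≠ w → f a = f b := by
  have hrest : f u ^ 2 + f w ^ 2 + (∑ v, f v - f u - f w) ^ 2 / (Fintype.card V - 2) =
      ∑ v, f v ^ 2 ↔ (∑ v ∈ {u, w}ᶜ, f v) ^ 2 / #{u, w}ᶜ = ∑ v ∈ {u, w}ᶜ, f v ^ 2 := by
    rw [Fintype.sum_compl_pair f huw, Fintype.sum_compl_pair (f · ^ 2) huw,
      Fintype.card_compl_pair huw]
    constructor <;> intro h <;> linarith
  rw [hrest, sq_sum_div_card_eq_sum_sq_iff]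
  simp only [mem_compl, mem_insert, mem_singleton, not_or]
  exact ⟨fun h a b hau haw hbu hbw => h a ⟨hau, haw⟩ b ⟨hbu, hbw⟩,
    fun h a ha b hb => h a b ha.1 ha.2 hb.1 hb.2⟩

end TwoPoints

theorem stmt13 {n : ℕ} (hn : 3 ≤ n) (G : SimpleGraph (Fin n)) [DecidableRel G.Adj]
    (m Δ δ : ℕ) (hm : m = G.edgeFinset.card)
    (hΔ : ∀ v, G.degree v ≤ Δ) (hΔ' : ∃ v, G.degree v = Δ)
    (hδ : ∀ v, δ ≤ G.degree v) (hδ' : ∃ v, G.degree v = δ)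
    (Z₁ : ℝ) (hZ : Z₁ = ∑ i : Fin n, (G.degree i : ℝ) ^ 2) :
    Z₁ ≥ (Δ : ℝ) ^ 2 + (δ : ℝ) ^ 2 + (2 * (m : ℝ) - Δ - δ) ^ 2 / ((n : ℝ) - 2) ∧
      (Z₁ = (Δ : ℝ) ^ 2 + (δ : ℝ) ^ 2 + (2 * (m : ℝ) - Δ - δ) ^ 2 / ((n : ℝ) - 2) ↔
        ∃ u w : Fin n, u ≠ w ∧ G.degree u = Δ ∧ G.degree w = δ ∧
          ∀ a b : Fin n, a ≠ u → a ≠ w → b ≠ u → b ≠ w → G.degree a = G.degree b) := by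
  have hsum : ∑ v, (G.degree v : ℝ) = 2 * m := by
    rw [hm]
    exact_mod_cast G.sum_degrees_eq_twice_card_edges
  have eq_iff : ∀ u w, u ≠ w → G.degree u = Δ → G.degree w = δ →
      (Z₁ = (Δ : ℝ) ^ 2 + (δ : ℝ) ^ 2 + (2 * (m : ℝ) - Δ - δ) ^ 2 / ((n : ℝ) - 2) ↔
        ∀ a b : Fin n, a ≠ u → a ≠ w → b ≠ u → b ≠ w → G.degree a = G.degree b) := by
    rintro u w huw rfl rfl
    simpa [hZ, hsum, eq_comm] using
      sq_add_sq_add_sq_sub_div_eq_sum_sq_iff (G.degree · : Fin n → ℝ) huw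
  obtain ⟨u, w, huw, hu, hw⟩ : ∃ u w : Fin n, u ≠ w ∧ G.degree u = Δ ∧ G.degree w = δ := by
    obtain ⟨u, hu⟩ := hΔ'
    obtain ⟨w, hw⟩ := hδ'
    by_cases huw : u = w
    · obtain ⟨w', hw'⟩ := Fintype.exists_ne_of_one_lt_card (by rw [Fintype.card_fin]; omega) u
      subst huw
      exact ⟨u, w', hw'.symm, hu, le_antisymm (hΔ w' |>.trans (hu.symm.trans hw).le) (hδ w')⟩
    · exact ⟨u, w, huw, hu, hw⟩
  refine ⟨?_, fun h => ⟨u, w, huw, hu, hw, (eq_iff u w huw hu hw).1 h⟩,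
    fun ⟨u', w', huw', hu', hw', hconst⟩ => (eq_iff u' w' huw' hu' hw').2 hconst⟩
  subst hu hw
  simpa [hZ, hsum] using sq_add_sq_add_sq_sub_div_le_sum_sq (G.degree · : Fin n → ℝ) huw
end

section
/- Let G be a graph of order n with degrees d₁ ≥ d₂ ≥ ... ≥ dₙ and α ∈ [0,1]. Then for each k ∈ {1,...,n}, the k-th largest eigenvalue of A_α(G) satisfies λₖ(A_α(G)) ≤ dₖ; in particular λ₁(A_α(G)) ≤ Δ = d₁. -/
open Matrix SimpleGraph Finset

/-!
Since `A_α = D - (1 - α) L` with `L` the positive semidefinite Laplacian, the quadratic form of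
`A_α` is at most `∑ dᵢ xᵢ²`. On vectors supported on `{i | dᵢ ≤ t}` it is therefore at most `t ‖x‖²`,
and a dimension count against the eigenvectors with eigenvalue `> t` shows that at least as many
eigenvalues as degrees are `≤ t`. For sorted sequences, this comparison of counts at every threshold
`t` gives the entrywise comparison.
-/

open scoped RealInnerProductSpace

namespace OrthonormalBasis

variable {E ι : Type*} [NormedAddCommGroup E] [InnerProductSpace ℝ E] [Fintype ι]
  (b : OrthonormalBasis ι ℝ E) {T : E →ₗ[ℝ] E} {μ : ι → ℝ}

theorem inner_apply_self_eq_sum (hT : ∀ i, T (b i) = μ i • b i) (x : E) :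
    ⟪x, T x⟫ = ∑ i, μ i * ⟪b i, x⟫ ^ 2 := by
  have hTx : T x = ∑ i, (μ i * ⟪b i, x⟫) • b i := by
    conv_lhs => rw [← b.sum_repr' x]
    simp only [map_sum, map_smul, hT, smul_smul, mul_comm]
  simp only [hTx, inner_sum, inner_smul_right, real_inner_comm x]
  exact sum_congr rfl fun i _ => by ring

/-- A subspace on which the quadratic form of `T` is at most `t` meets the span of the eigenvectors
with eigenvalue `> t` trivially. -/
theorem finrank_le_card_filter_le (hT : ∀ i, T (b i) = μ i • b i) (t : ℝ) (V : Submodule ℝ E)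
    (hV : ∀ x ∈ V, ⟪x, T x⟫ ≤ t * ‖x‖ ^ 2) :
    Module.finrank ℝ V ≤ #{i | μ i ≤ t} := by
  let coeffs : V →ₗ[ℝ] ({i // μ i ≤ t} → ℝ) :=
    { toFun := fun x i => ⟪b i, (x : E)⟫
      map_add' := fun x y => by ext i; simp [inner_add_right]
      map_smul' := fun c x => by ext i; simp [inner_smul_right] }
  have hinj : Function.Injective coeffs := by
    rw [← LinearMap.ker_eq_bot, LinearMap.ker_eq_bot']
    rintro ⟨x, hx⟩ hcoeffs
    have hlow : ∀ i, μ i ≤ t → ⟪b i, x⟫ = 0 := fun i hi => congrFun hcoeffs ⟨i, hi⟩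
    have hterm : ∀ i ∈ univ, 0 ≤ (μ i - t) * ⟪b i, x⟫ ^ 2 := by
      intro i _
      rcases le_or_gt (μ i) t with hi | hi
      · simp [hlow i hi]
      · exact mul_nonneg (sub_nonneg.2 hi.le) (sq_nonneg _)
    have hsum : ∑ i, (μ i - t) * ⟪b i, x⟫ ^ 2 = ⟪x, T x⟫ - t * ‖x‖ ^ 2 := by
      rw [b.inner_apply_self_eq_sum hT, ← b.sum_sq_norm_inner_right x, mul_sum, ← sum_sub_distrib]
      exact sum_congr rfl fun i _ => by rw [Real.norm_eq_abs, sq_abs]; ring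
    have hzero := (sum_eq_zero_iff_of_nonneg hterm).1
      (le_antisymm (by linarith [hV x hx]) (sum_nonneg hterm))
    have hcoord : ∀ i, ⟪b i, x⟫ = 0 := by
      intro i
      rcases le_or_gt (μ i) t with hi | hi
      · exact hlow i hi
      · simpa [(sub_pos.2 hi).ne'] using hzero i (mem_univ i)
    ext1
    simpa [hcoord] using (b.sum_repr' x).symm
  simpa [Module.finrank_pi, Fintype.card_subtype] using
    LinearMap.finrank_le_finrank_of_injective hinj

end OrthonormalBasis

theorem Matrix.IsHermitian.card_le_card_filter_eigenvalues_le {ι : Type*} [Fintype ι]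
    [DecidableEq ι] {M : Matrix ι ι ℝ} (hM : M.IsHermitian) (t : ℝ) (S : Finset ι)
    (hS : ∀ x : ι → ℝ, (∀ i ∉ S, x i = 0) → x ⬝ᵥ M *ᵥ x ≤ t * (x ⬝ᵥ x)) :
    #S ≤ #{i | hM.eigenvalues i ≤ t} := by
  let e := (EuclideanSpace.basisFun ι ℝ).toBasis
  have hV : ∀ x ∈ Submodule.span ℝ (e '' S), ⟪x, toLpLin 2 2 M x⟫ ≤ t * ‖x‖ ^ 2 := by
    intro x hx
    rw [e.mem_span_image] at hx
    have hform := hS x fun i hi => by simpa [e] using fun h => hi (hx h)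
    rw [← real_inner_self_eq_norm_sq, EuclideanSpace.inner_eq_star_dotProduct,
      EuclideanSpace.inner_eq_star_dotProduct, toLpLin_apply, WithLp.ofLp_toLp, star_trivial,
      dotProduct_comm]
    exact hform
  have hfinrank : Module.finrank ℝ (Submodule.span ℝ (e '' S)) = #S := by
    rw [Set.image_eq_range]
    exact (finrank_span_eq_card (e.linearIndependent.comp _ Subtype.val_injective)).trans
      (Fintype.card_coe S)
  rw [← hfinrank]
  refine hM.eigenvectorBasis.finrank_le_card_filter_le (fun i => ?_) t _ hV
  exact WithLp.ofLp_injective 2 (by simpa [toLpLin_apply] using hM.mulVec_eigenvectorBasis i)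

theorem le_of_forall_card_filter_le_le {ι α : Type*} [Fintype ι] [LinearOrder α] {n : ℕ}
    {f g : ι → α} (p e : Fin n ≃ ι) (hf : Antitone fun k => f (p k))
    (hg : Antitone fun k => g (e k)) (h : ∀ t, #{i | g i ≤ t} ≤ #{i | f i ≤ t}) (k : Fin n) :
    f (p k) ≤ g (e k) := by
  by_contra! hlt
  have hg_le : (Ici k).map e.toEmbedding ⊆ ({i | g i ≤ g (e k)} : Finset ι) := by
    simp only [subset_iff, mem_map_equiv, mem_Ici, mem_filter_univ]
    intro i hi
    simpa using hg hi
  have hf_le : ({i | f i ≤ g (e k)} : Finset ι) ⊆ (Ioi k).map p.toEmbedding := by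
    simp only [subset_iff, mem_map_equiv, mem_Ioi, mem_filter_univ]
    intro i hi
    by_contra! hle
    exact (hlt.trans_le (by simpa using hf hle)).not_ge hi
  have hcard := (card_le_card hg_le).trans ((h _).trans (card_le_card hf_le))
  simp only [card_map, Fin.card_Ici, Fin.card_Ioi] at hcard
  omega

namespace SimpleGraph

variable {n : ℕ} (G : SimpleGraph (Fin n)) [DecidableRel G.Adj]

theorem Aalpha_eq_degMatrix_sub_smul_lapMatrix (α : ℝ) :
    Aalpha G α = G.degMatrix ℝ - (1 - α) • G.lapMatrix ℝ := by
  rw [Aalpha, lapMatrix, degMatrix]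
  module

theorem dotProduct_mulVec_Aalpha_le {α : ℝ} (hα : α ≤ 1) (x : Fin n → ℝ) :
    x ⬝ᵥ Aalpha G α *ᵥ x ≤ ∑ i, G.degree i * x i * x i := by
  have hL := (G.posSemidef_lapMatrix ℝ).dotProduct_mulVec_nonneg x
  rw [star_trivial] at hL
  rw [Aalpha_eq_degMatrix_sub_smul_lapMatrix, sub_mulVec, dotProduct_sub, smul_mulVec,
    dotProduct_smul, dotProduct_mulVec_degMatrix, smul_eq_mul]
  linarith [mul_nonneg (sub_nonneg.2 hα) hL]

theorem card_filter_degree_le_le_card_filter_eigenvalues_le {α : ℝ} (hα : α ≤ 1)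
    (hH : (Aalpha G α).IsHermitian) (t : ℝ) :
    #{i | (G.degree i : ℝ) ≤ t} ≤ #{i | hH.eigenvalues i ≤ t} := by
  refine hH.card_le_card_filter_eigenvalues_le t _ fun x hx => ?_
  refine (G.dotProduct_mulVec_Aalpha_le hα x).trans ?_
  rw [dotProduct, mul_sum]
  refine sum_le_sum fun i _ => ?_
  by_cases hi : (G.degree i : ℝ) ≤ t
  · rw [mul_assoc]
    exact mul_le_mul_of_nonneg_right hi (mul_self_nonneg _)
  · simp [hx i (by simpa using hi)]

end SimpleGraph

theorem stmt17_general {n : ℕ} (G : SimpleGraph (Fin n)) [DecidableRel G.Adj]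
    (α : ℝ) (hα1 : α ≤ 1)
    (hH : (Aalpha G α).IsHermitian) :
    (∀ p e : Equiv.Perm (Fin n),
        Antitone (fun k => hH.eigenvalues (p k)) →
        Antitone (fun k => G.degree (e k)) →
        ∀ k : Fin n, hH.eigenvalues (p k) ≤ (G.degree (e k) : ℝ)) ∧
      (⨆ i, hH.eigenvalues i) ≤ (G.maxDegree : ℝ) := by
  have hcount := G.card_filter_degree_le_le_card_filter_eigenvalues_le hα1 hH
  refine ⟨fun p e hp he => le_of_forall_card_filter_le_le p e hp
    (Nat.mono_cast.comp_antitone he) hcount, Real.iSup_le (fun i => ?_) (Nat.cast_nonneg _)⟩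
  have hall : #{i | (G.degree i : ℝ) ≤ G.maxDegree} = #(univ : Finset (Fin n)) :=
    card_filter_eq_iff.2 fun j _ => Nat.cast_le.2 (G.degree_le_maxDegree j)
  have hsmall := hall ▸ hcount G.maxDegree
  exact card_filter_eq_iff.1 (le_antisymm (card_filter_le _ _) hsmall) i (mem_univ i)

theorem stmt17 {n : ℕ} (G : SimpleGraph (Fin n)) [DecidableRel G.Adj]
    (α : ℝ) (hα0 : 0 ≤ α) (hα1 : α ≤ 1)
    (hH : (Aalpha G α).IsHermitian) :
    (∀ p e : Equiv.Perm (Fin n),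
        Antitone (fun k => hH.eigenvalues (p k)) →
        Antitone (fun k => G.degree (e k)) →
        ∀ k : Fin n, hH.eigenvalues (p k) ≤ (G.degree (e k) : ℝ)) ∧
      (⨆ i, hH.eigenvalues i) ≤ (G.maxDegree : ℝ) :=
  stmt17_general G α hα1 hH
end

section
/- Let G be a graph on n vertices with clique number ω. For any nonnegative vector x ∈ ℝⁿ with Σᵢ xᵢ = 1, xᵀA(G)x ≤ 1 - 1/ω, and the maximum over all such x equals 1 - 1/ω (Motzkin–Straus). -/
open Matrix SimpleGraph Finset

/-!
Motzkin–Straus. If the support of `x` is not a clique, pick two non-adjacent vertices in it: the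
form `xᵀAx` is affine along the direction moving weight between them, so all the weight of one can
be moved onto the other without decreasing `xᵀAx`. Iterating, we reach a point of the simplex
supported on a clique `S`, where `xᵀAx = 1 - ∑ xᵢ² ≤ 1 - 1/|S| ≤ 1 - 1/ω` by Cauchy–Schwarz. The
uniform distribution on a maximum clique attains the bound.
-/

namespace Matrix

variable {ι R : Type*} [Fintype ι] [CommRing R] {M : Matrix ι ι R}

lemma IsSymm.dotProduct_mulVec_comm (hM : M.IsSymm) (x y : ι → R) :
    x ⬝ᵥ M *ᵥ y = y ⬝ᵥ M *ᵥ x := by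
  rw [dotProduct_mulVec, ← mulVec_transpose, hM.eq, dotProduct_comm]

lemma IsSymm.dotProduct_mulVec_add_self (hM : M.IsSymm) (x y : ι → R) :
    (x + y) ⬝ᵥ M *ᵥ (x + y) = x ⬝ᵥ M *ᵥ x + 2 * (y ⬝ᵥ M *ᵥ x) + y ⬝ᵥ M *ᵥ y := by
  rw [mulVec_add, add_dotProduct, dotProduct_add, dotProduct_add, hM.dotProduct_mulVec_comm x y]
  ring

lemma IsSymm.dotProduct_mulVec_add_single_sub_single [DecidableEq ι] (hM : M.IsSymm)
    {i j : ι} (hii : M i i = 0) (hjj : M j j = 0) (hij : M i j = 0) (x : ι → R) (t : R) :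
    (x + (Pi.single i t - Pi.single j t)) ⬝ᵥ M *ᵥ (x + (Pi.single i t - Pi.single j t)) =
      x ⬝ᵥ M *ᵥ x + 2 * t * ((M *ᵥ x) i - (M *ᵥ x) j) := by
  have hji : M j i = 0 := hM.apply i j ▸ hij
  rw [hM.dotProduct_mulVec_add_self]
  simp only [mulVec_sub, mulVec_single, sub_dotProduct, dotProduct_sub, single_dotProduct,
    col_apply, Pi.smul_apply, op_smul_eq_mul, hii, hjj, hij, hji]
  ring

end Matrix

namespace SimpleGraph

lemma cliqueNum_pos {V : Type*} [Finite V] [Nonempty V] (G : SimpleGraph V) : 0 < G.cliqueNum := by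
  obtain ⟨v⟩ := ‹Nonempty V›
  have hv : G.IsClique (({v} : Finset V) : Set V) := by simp
  exact (by simpa using hv.card_le_cliqueNum : 1 ≤ G.cliqueNum)

variable {V : Type*} [Fintype V] [DecidableEq V] (G : SimpleGraph V) [DecidableRel G.Adj]

lemma dotProduct_adjMatrix_mulVec_add_single_sub_single {R : Type*} [CommRing R] {i j : V}
    (hij : ¬G.Adj i j) (x : V → R) (t : R) :
    (x + (Pi.single i t - Pi.single j t)) ⬝ᵥ G.adjMatrix R *ᵥ (x + (Pi.single i t - Pi.single j t)) =
      x ⬝ᵥ G.adjMatrix R *ᵥ x + 2 * t * ((G.adjMatrix R *ᵥ x) i - (G.adjMatrix R *ᵥ x) j) :=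
  G.isSymm_adjMatrix.dotProduct_mulVec_add_single_sub_single (by simp) (by simp) (by simp [hij]) x t

lemma dotProduct_adjMatrix_mulVec_of_isClique_support {R : Type*} [CommRing R] {x : V → R}
    (hx : G.IsClique (Function.support x)) :
    x ⬝ᵥ G.adjMatrix R *ᵥ x = (∑ i, x i) ^ 2 - ∑ i, x i ^ 2 := by
  have hentry : ∀ i j, x i * (G.adjMatrix R i j * x j) = x i * x j - if i = j then x i ^ 2 else 0 := by
    intro i j
    by_cases hxi : x i = 0
    · simp [hxi]
    by_cases hxj : x j = 0
    · by_cases h : i = j <;> simp_all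
    by_cases h : i = j
    · subst h; simp [sq]
    · simp [hx hxi hxj h, h]
  simp only [dotProduct, mulVec, Finset.mul_sum, hentry, Finset.sum_sub_distrib,
    Finset.sum_ite_eq, Finset.mem_univ, if_true]
  rw [sq, Finset.sum_mul_sum]

lemma dotProduct_adjMatrix_mulVec_le_of_isClique_support {x : V → ℝ}
    (hx : G.IsClique (Function.support x)) (hsum : ∑ i, x i = 1) :
    x ⬝ᵥ G.adjMatrix ℝ *ᵥ x ≤ 1 - 1 / (G.cliqueNum : ℝ) := by
  set S := univ.filter (x · ≠ 0)
  have hsumS : ∑ i ∈ S, x i = 1 := by rw [Finset.sum_filter_ne_zero, hsum]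
  have hsqS : ∑ i ∈ S, x i ^ 2 = ∑ i, x i ^ 2 :=
    Finset.sum_filter_of_ne fun _ _ h => by simpa using h
  have hS : (0 : ℝ) < #S :=
    Nat.cast_pos.2 <| Finset.card_pos.2 <| Finset.nonempty_of_sum_ne_zero (hsumS ▸ one_ne_zero)
  have hSclique : G.IsClique (S : Set V) := hx.subset fun i hi => (Finset.mem_filter.1 hi).2
  have hSω : (#S : ℝ) ≤ G.cliqueNum := by exact_mod_cast hSclique.card_le_cliqueNum
  have hCS : 1 ≤ #S * ∑ i, x i ^ 2 := by
    simpa [hsumS, hsqS] using sq_sum_le_card_mul_sum_sq (s := S) (f := x)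
  rw [G.dotProduct_adjMatrix_mulVec_of_isClique_support hx, hsum]
  calc 1 ^ 2 - ∑ i, x i ^ 2 ≤ 1 - 1 / (#S : ℝ) := by
        rw [one_pow, sub_le_sub_iff_left, div_le_iff₀' hS]; exact hCS
    _ ≤ 1 - 1 / (G.cliqueNum : ℝ) := by gcongr

lemma exists_transfer_mass {x : V → ℝ} (hx : 0 ≤ x) {i j : V} (hi : x i ≠ 0) (hj : x j ≠ 0)
    (hne : i ≠ j) (hij : ¬G.Adj i j) :
    ∃ y : V → ℝ, 0 ≤ y ∧ ∑ k, y k = ∑ k, x k ∧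
      x ⬝ᵥ G.adjMatrix ℝ *ᵥ x ≤ y ⬝ᵥ G.adjMatrix ℝ *ᵥ y ∧
      Function.support y ⊂ Function.support x := by
  wlog hle : (G.adjMatrix ℝ *ᵥ x) j ≤ (G.adjMatrix ℝ *ᵥ x) i generalizing i j
  · exact this hj hi hne.symm (fun h => hij h.symm) (le_of_not_ge hle)
  set y := x + (Pi.single i (x j) - Pi.single j (x j))
  have hyi : y i = x i + x j := by simp [y, hne]
  have hyj : y j = 0 := by simp [y, hne.symm]
  have hyk : ∀ k, k ≠ i → k ≠ j → y k = x k := by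
    intro k hki hkj
    simp [y, hki, hkj]
  refine ⟨y, fun k => ?_, ?_, ?_, ?_⟩
  · by_cases hki : k = i
    · rw [hki, hyi]
      exact add_nonneg (hx i) (hx j)
    by_cases hkj : k = j
    · exact hkj ▸ hyj.ge
    rw [hyk k hki hkj]
    exact hx k
  · simp [y, Finset.sum_add_distrib, Finset.sum_sub_distrib]
  · rw [G.dotProduct_adjMatrix_mulVec_add_single_sub_single hij]
    have := mul_nonneg (hx j) (sub_nonneg.2 hle)
    linarith
  · refine (Set.ssubset_iff_of_subset fun k hk => ?_).2 ⟨j, hj, by simp [hyj]⟩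
    by_cases hki : k = i
    · rw [hki]
      exact hi
    by_cases hkj : k = j
    · simp [hkj, hyj] at hk
    rwa [Function.mem_support, ← hyk k hki hkj]

lemma exists_le_dotProduct_adjMatrix_mulVec_isClique_support {x : V → ℝ} (hx : 0 ≤ x) :
    ∃ y : V → ℝ, 0 ≤ y ∧ ∑ k, y k = ∑ k, x k ∧
      x ⬝ᵥ G.adjMatrix ℝ *ᵥ x ≤ y ⬝ᵥ G.adjMatrix ℝ *ᵥ y ∧ G.IsClique (Function.support y) := by
  induction hm : (Function.support x).ncard using Nat.strong_induction_on generalizing x with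
  | _ m ih =>
  by_cases hcl : G.IsClique (Function.support x)
  · exact ⟨x, hx, rfl, le_rfl, hcl⟩
  obtain ⟨i, hi, j, hj, hne, hij⟩ :
      ∃ i ∈ Function.support x, ∃ j ∈ Function.support x, i ≠ j ∧ ¬G.Adj i j := by
    simpa [IsClique, Set.Pairwise] using hcl
  obtain ⟨y, hy, hsum, hle, hsupp⟩ := G.exists_transfer_mass hx hi hj hne hij
  obtain ⟨z, hz, hzsum, hzle, hzcl⟩ := ih _ (hm ▸ Set.ncard_lt_ncard hsupp) hy rfl
  exact ⟨z, hz, hzsum.trans hsum, hle.trans hzle, hzcl⟩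

lemma exists_dotProduct_adjMatrix_mulVec_eq_of_isClique {s : Finset V}
    (hs : G.IsClique (s : Set V)) (hne : s.Nonempty) :
    ∃ x : V → ℝ, 0 ≤ x ∧ ∑ i, x i = 1 ∧ x ⬝ᵥ G.adjMatrix ℝ *ᵥ x = 1 - 1 / (#s : ℝ) := by
  have hcard : (#s : ℝ) ≠ 0 := Nat.cast_ne_zero.2 hne.card_pos.ne'
  set x := (s : Set V).indicator fun _ => (#s : ℝ)⁻¹
  have hsum : ∑ i, x i = 1 := by simp [x, Set.indicator_apply, Finset.sum_ite_mem, hcard]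
  refine ⟨x, fun i => Set.indicator_nonneg (fun _ _ => by positivity) i, hsum, ?_⟩
  rw [G.dotProduct_adjMatrix_mulVec_of_isClique_support (hs.subset Set.support_indicator_subset),
    hsum]
  simp [Set.indicator_apply, Finset.sum_ite_mem]
  field_simp

end SimpleGraph

theorem stmt18 {n : ℕ} (hn : 0 < n) (G : SimpleGraph (Fin n)) [DecidableRel G.Adj]
    (ω : ℕ) (hω : ω = G.cliqueNum) :
    (∀ x : Fin n → ℝ, (∀ i, 0 ≤ x i) → ∑ i, x i = 1 →
        x ⬝ᵥ (G.adjMatrix ℝ).mulVec x ≤ 1 - 1 / (ω : ℝ)) ∧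
      ∃ x : Fin n → ℝ, (∀ i, 0 ≤ x i) ∧ ∑ i, x i = 1 ∧
        x ⬝ᵥ (G.adjMatrix ℝ).mulVec x = 1 - 1 / (ω : ℝ) := by
  subst hω
  refine ⟨fun x hx hsum => ?_, ?_⟩
  · obtain ⟨y, -, hysum, hle, hcl⟩ := G.exists_le_dotProduct_adjMatrix_mulVec_isClique_support hx
    exact hle.trans (G.dotProduct_adjMatrix_mulVec_le_of_isClique_support hcl (hysum.trans hsum))
  · have : Nonempty (Fin n) := ⟨⟨0, hn⟩⟩
    obtain ⟨s, hs⟩ := G.exists_isNClique_cliqueNum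
    have hne : s.Nonempty := Finset.card_pos.1 (hs.card_eq ▸ G.cliqueNum_pos)
    obtain ⟨x, hx, hsum, hQ⟩ := G.exists_dotProduct_adjMatrix_mulVec_eq_of_isClique hs.isClique hne
    exact ⟨x, hx, hsum, hs.card_eq ▸ hQ⟩
end
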